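/- arXiv:2006.03621 — 6 statements merged into one kernel-verified Lean document; each statement's English description precedes it below -/
import Mathlib

section
/- Fix r ∈ ℓ↓ and λ ∈ (0,∞). Then there exists exactly one pair (g, v), where g : [0,∞) → ℓ↓ is continuous in the ℓ¹ norm and v = (v₁, v₂, …) : [0,∞) → ℓ^∞ is continuous in the supremum norm, such that, with v₀(t) := λt, for every i ≥ 1 and every t ≥ 0: g_i(t) = Γ₁( r_i − ∫₀^· (g_i(s) − g_{i+1}(s)) ds + v_{i−1}(·) )(t) and v_i(t) = Γ̂₁( r_i − ∫₀^· (g_i(s) − g_{i+1}(s)) ds + v_{i−1}(·) )(t). -/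
open Filter Topology intervalIntegral
open scoped NNReal

/-- The one-dimensional Skorohod map with reflecting barrier at `α`:
`Γ_α(f)(t) = f(t) − sup_{s ∈ [0,t]} (f(s) − α)⁺`. -/
noncomputable def SkorohodMap (α : ℝ) (f : ℝ≥0 → ℝ) (t : ℝ≥0) : ℝ :=
  f t - sSup ((fun s => max (f s - α) 0) '' Set.Icc 0 t)

/-- The regulator part of the one-dimensional Skorohod map:
`Γ̂_α(f)(t) = sup_{s ∈ [0,t]} (f(s) − α)⁺`. -/
noncomputable def SkorohodMapHat (α : ℝ) (f : ℝ≥0 → ℝ) (t : ℝ≥0) : ℝ :=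
  sSup ((fun s => max (f s - α) 0) '' Set.Icc 0 t)

/-- `x ∈ ℓ↓`, where `x i` stands for the paper's coordinate `x_{i+1}`:
all coordinates lie in `[0,1]`, the sequence is non-increasing and summable. -/
def MemLdown (x : ℕ → ℝ) : Prop :=
  (∀ i, 0 ≤ x i ∧ x i ≤ 1) ∧ (∀ i, x (i + 1) ≤ x i) ∧ Summable x

set_option linter.unusedSectionVars false

namespace SKaux

variable {f g : ℝ≥0 → ℝ} {t s a b : ℝ≥0} {c : ℝ}

lemma map_hat (f : ℝ≥0 → ℝ) (t : ℝ≥0) :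
    SkorohodMap 1 f t = f t - SkorohodMapHat 1 f t := rfl

lemma hat_set_nonempty (f : ℝ≥0 → ℝ) (t : ℝ≥0) :
    ((fun s => max (f s - 1) 0) '' Set.Icc 0 t).Nonempty :=
  ⟨_, ⟨0, ⟨le_rfl, zero_le (a := t)⟩, rfl⟩⟩

lemma hat_bdd (hf : Continuous f) (t : ℝ≥0) :
    BddAbove ((fun s => max (f s - 1) 0) '' Set.Icc 0 t) :=
  ((isCompact_Icc).image (by continuity)).bddAbove

lemma le_hat (hf : Continuous f) (hs : s ∈ Set.Icc 0 t) :
    max (f s - 1) 0 ≤ SkorohodMapHat 1 f t :=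
  le_csSup (hat_bdd hf t) ⟨s, hs, rfl⟩

lemma hat_nonneg (hf : Continuous f) (t : ℝ≥0) : 0 ≤ SkorohodMapHat 1 f t :=
  le_trans (le_max_right _ _) (le_hat hf ⟨le_rfl, zero_le (a := t)⟩)

lemma hat_le (h : ∀ s ∈ Set.Icc 0 t, max (f s - 1) 0 ≤ c) :
    SkorohodMapHat 1 f t ≤ c := by
  refine csSup_le (hat_set_nonempty f t) ?_
  rintro x ⟨s, hs, rfl⟩
  exact h s hs

lemma hat_mono (hf : Continuous f) (hab : a ≤ b) :
    SkorohodMapHat 1 f a ≤ SkorohodMapHat 1 f b :=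
  csSup_le_csSup (hat_bdd hf b) (hat_set_nonempty f a)
    (Set.image_mono (Set.Icc_subset_Icc le_rfl hab))

lemma map_le_one (hf : Continuous f) (t : ℝ≥0) : SkorohodMap 1 f t ≤ 1 := by
  have h := le_hat hf (s := t) ⟨zero_le (a := t), le_rfl⟩
  have h2 : f t - 1 ≤ max (f t - 1) 0 := le_max_left _ _
  rw [map_hat]; linarith

lemma map_le (hf : Continuous f) (t : ℝ≥0) : SkorohodMap 1 f t ≤ f t := by
  rw [map_hat]; linarith [hat_nonneg hf t]

lemma hat_dist (hf : Continuous f) (hg : Continuous g)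
    (h : ∀ s ∈ Set.Icc 0 t, |f s - g s| ≤ c) :
    |SkorohodMapHat 1 f t - SkorohodMapHat 1 g t| ≤ c := by
  have key : ∀ (u v : ℝ≥0 → ℝ), Continuous u → Continuous v →
      (∀ s ∈ Set.Icc 0 t, |u s - v s| ≤ c) →
      SkorohodMapHat 1 u t ≤ SkorohodMapHat 1 v t + c := by
    intro u v hu hv huv
    refine hat_le fun s hs => ?_
    have h1 : |max (u s - 1) 0 - max (v s - 1) 0| ≤ |(u s - 1) - (v s - 1)| :=
      abs_max_sub_max_le_abs _ _ _
    have h2 : |(u s - 1) - (v s - 1)| = |u s - v s| := by ring_nf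
    have h3 := le_hat hv hs
    have h4 := huv s hs
    rw [h2] at h1
    have := abs_le.1 h1
    linarith [this.2]
  have h1 := key f g hf hg h
  have h2 := key g f hg hf (fun s hs => by rw [abs_sub_comm]; exact h s hs)
  rw [abs_le]; constructor <;> linarith

lemma map_dist (hf : Continuous f) (hg : Continuous g)
    (h : ∀ s ∈ Set.Icc 0 t, |f s - g s| ≤ c) :
    |SkorohodMap 1 f t - SkorohodMap 1 g t| ≤ 2 * c := by
  have h1 := hat_dist hf hg h
  have h2 := h t ⟨zero_le (a := t), le_rfl⟩
  rw [map_hat, map_hat]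
  have : f t - SkorohodMapHat 1 f t - (g t - SkorohodMapHat 1 g t)
      = (f t - g t) - (SkorohodMapHat 1 f t - SkorohodMapHat 1 g t) := by ring
  rw [this]
  calc |(f t - g t) - (SkorohodMapHat 1 f t - SkorohodMapHat 1 g t)|
      ≤ |f t - g t| + |SkorohodMapHat 1 f t - SkorohodMapHat 1 g t| := abs_sub _ _
    _ ≤ 2 * c := by linarith

lemma hat_attained (hf : Continuous f) (t : ℝ≥0) :
    ∃ s ∈ Set.Icc 0 t, SkorohodMapHat 1 f t = max (f s - 1) 0 := by
  obtain ⟨s, hs, hmax⟩ := (isCompact_Icc (a := (0:ℝ≥0)) (b := t)).exists_isMaxOn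
    ⟨0, le_rfl, zero_le (a := t)⟩ (Continuous.continuousOn (by continuity :
      Continuous fun s => max (f s - 1) 0))
  refine ⟨s, hs, le_antisymm (hat_le fun u hu => hmax hu) (le_hat hf hs)⟩

lemma hat_flat (hf : Continuous f) (hab : a ≤ b)
    (h : ∀ s ∈ Set.Ioc a b, SkorohodMap 1 f s < 1) :
    SkorohodMapHat 1 f b = SkorohodMapHat 1 f a := by
  by_contra hne
  have hlt : SkorohodMapHat 1 f a < SkorohodMapHat 1 f b :=
    lt_of_le_of_ne (hat_mono hf hab) (Ne.symm hne)
  obtain ⟨s, hs, hval⟩ := hat_attained hf b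
  have hsa : ¬ s ≤ a := by
    intro hsa
    exact absurd (hval ▸ le_hat hf ⟨hs.1, hsa⟩) (not_le.2 hlt)
  push_neg at hsa
  have hsIoc : s ∈ Set.Ioc a b := ⟨hsa, hs.2⟩
  have hpos : 0 < max (f s - 1) 0 := by
    rw [← hval]; exact lt_of_le_of_lt (hat_nonneg hf a) hlt
  have hfs : max (f s - 1) 0 = f s - 1 := by
    rcases max_cases (f s - 1) (0:ℝ) with ⟨h1, _⟩ | ⟨h1, h2⟩
    · exact h1
    · rw [h1] at hpos; exact absurd hpos (lt_irrefl _)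
  have hhats : SkorohodMapHat 1 f s = f s - 1 := by
    refine le_antisymm ?_ (hfs ▸ le_hat hf ⟨zero_le (a := s), le_rfl⟩)
    calc SkorohodMapHat 1 f s ≤ SkorohodMapHat 1 f b := hat_mono hf hs.2
      _ = f s - 1 := by rw [hval, hfs]
  have : SkorohodMap 1 f s = 1 := by rw [map_hat, hhats]; ring
  exact absurd (this ▸ h s hsIoc) (lt_irrefl _)


lemma hat_zero (f : ℝ≥0 → ℝ) : SkorohodMapHat 1 f 0 = max (f 0 - 1) 0 := by
  rw [SkorohodMapHat, Set.Icc_self, Set.image_singleton, csSup_singleton]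

lemma map_zero (f : ℝ≥0 → ℝ) : SkorohodMap 1 f 0 = f 0 - max (f 0 - 1) 0 := by
  rw [SkorohodMap, Set.Icc_self, Set.image_singleton, csSup_singleton]

lemma hat_continuous (hf : Continuous f) : Continuous (SkorohodMapHat 1 f) := by
  rw [Metric.continuous_iff]
  intro t₀ ε hε
  have hK : IsCompact (Set.Icc (0:ℝ≥0) (t₀+1)) := isCompact_Icc
  have huc : UniformContinuousOn f (Set.Icc 0 (t₀+1)) :=
    hK.uniformContinuousOn_of_continuous hf.continuousOn
  rw [Metric.uniformContinuousOn_iff] at huc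
  obtain ⟨δ, hδ, hd⟩ := huc (ε/2) (by linarith)
  refine ⟨min δ 1, lt_min hδ one_pos, fun t ht => ?_⟩
  have htd : dist t t₀ < δ := lt_of_lt_of_le ht (min_le_left _ _)
  have ht1 : dist t t₀ < 1 := lt_of_lt_of_le ht (min_le_right _ _)
  have key : ∀ a b : ℝ≥0, a ≤ b → b ≤ t₀ + 1 → dist a b < δ →
      SkorohodMapHat 1 f b ≤ SkorohodMapHat 1 f a + ε/2 := by
    intro a b hab hb1 hdab
    refine hat_le fun s hs => ?_
    by_cases hsa : s ≤ a
    · have := le_hat hf (⟨hs.1, hsa⟩ : s ∈ Set.Icc 0 a)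
      linarith
    · push_neg at hsa
      have hsb : s ≤ b := hs.2
      have hsab : dist s a < δ := by
        rw [NNReal.dist_eq] at hdab ⊢
        have h1 : (a:ℝ) ≤ s := NNReal.coe_le_coe.2 hsa.le
        have h2 : (s:ℝ) ≤ b := NNReal.coe_le_coe.2 hsb
        have h3 : (a:ℝ) ≤ b := NNReal.coe_le_coe.2 hab
        rw [abs_of_nonpos (by linarith), neg_sub] at hdab
        rw [abs_of_nonneg (by linarith)]
        linarith
      have hsmem : s ∈ Set.Icc (0:ℝ≥0) (t₀+1) := ⟨zero_le, le_trans hsb hb1⟩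
      have hamem : a ∈ Set.Icc (0:ℝ≥0) (t₀+1) := ⟨zero_le, le_trans hab hb1⟩
      have hfs : dist (f s) (f a) < ε/2 := hd s hsmem a hamem hsab
      rw [Real.dist_eq] at hfs
      have h1 : |max (f s - 1) 0 - max (f a - 1) 0| ≤ |(f s - 1) - (f a - 1)| :=
        abs_max_sub_max_le_abs _ _ _
      have h2 : |(f s - 1) - (f a - 1)| = |f s - f a| := by ring_nf
      rw [h2] at h1
      have h3 := le_hat hf (⟨zero_le (a := a), le_rfl⟩ : a ∈ Set.Icc 0 a)
      have := (abs_le.1 h1).2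
      linarith
  rw [Real.dist_eq]
  rcases le_total t t₀ with h | h
  · have hk := key t t₀ h (le_trans le_self_add le_rfl) htd
    have mono := hat_mono hf h
    rw [abs_of_nonpos (by linarith)]
    linarith
  · have htb : t ≤ t₀ + 1 := by
      have h0 : (t₀:ℝ) ≤ t := NNReal.coe_le_coe.2 h
      rw [NNReal.dist_eq, abs_of_nonneg (by linarith)] at ht1
      have : (t:ℝ) ≤ (t₀:ℝ) + 1 := by linarith
      exact_mod_cast this
    have hk := key t₀ t h htb (by rwa [dist_comm] at htd)
    have mono := hat_mono hf h
    rw [abs_of_nonneg (by linarith)]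
    linarith

lemma map_continuous (hf : Continuous f) : Continuous (SkorohodMap 1 f) := by
  have : SkorohodMap 1 f = fun t => f t - SkorohodMapHat 1 f t := rfl
  rw [this]
  exact hf.sub (hat_continuous hf)


/-- The driving path of coordinate `i` built from a candidate pair `(g, v)`. -/
noncomputable def Fm (r : ℕ → ℝ) (lam : ℝ) (g v : ℝ≥0 → ℕ → ℝ) (i : ℕ) : ℝ≥0 → ℝ :=
  fun u => r i - (∫ s in (0:ℝ)..(u:ℝ), (g s.toNNReal i - g s.toNNReal (i+1)))
      + (if i = 0 then lam * (u:ℝ) else v u (i-1))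

variable {r : ℕ → ℝ} {lam : ℝ} {g v g' v' : ℝ≥0 → ℕ → ℝ}

lemma phi_cont (hg : ∀ i, Continuous fun t => g t i) (i : ℕ) :
    Continuous fun s : ℝ => g s.toNNReal i - g s.toNNReal (i+1) :=
  ((hg i).comp continuous_real_toNNReal).sub ((hg (i+1)).comp continuous_real_toNNReal)

lemma Fm_continuous (hg : ∀ i, Continuous fun t => g t i)
    (hv : ∀ i, Continuous fun t => v t i) (i : ℕ) :
    Continuous (Fm r lam g v i) := by
  have hint : Continuous fun u : ℝ =>
      ∫ s in (0:ℝ)..u, (g s.toNNReal i - g s.toNNReal (i+1)) :=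
    intervalIntegral.continuous_primitive
      (fun a b => (phi_cont hg i).intervalIntegrable a b) 0
  have h1 : Continuous fun u : ℝ≥0 => r i -
      ∫ s in (0:ℝ)..(u:ℝ), (g s.toNNReal i - g s.toNNReal (i+1)) :=
    continuous_const.sub (hint.comp NNReal.continuous_coe)
  have h2 : Continuous fun u : ℝ≥0 => (if i = 0 then lam * (u:ℝ) else v u (i-1)) := by
    rcases eq_or_ne i 0 with h | h
    · simpa [h] using (by fun_prop :
        Continuous fun u : ℝ≥0 => lam * (u:ℝ))
    · simpa [h] using hv (i-1)
  exact h1.add h2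

lemma Fm_sub (hg : ∀ i, Continuous fun t => g t i) (i : ℕ) (a b : ℝ≥0) :
    Fm r lam g v i b - Fm r lam g v i a
      = -(∫ s in (a:ℝ)..(b:ℝ), (g s.toNNReal i - g s.toNNReal (i+1)))
        + ((if i = 0 then lam * (b:ℝ) else v b (i-1))
            - (if i = 0 then lam * (a:ℝ) else v a (i-1))) := by
  have h1 : (∫ s in (0:ℝ)..(a:ℝ), (g s.toNNReal i - g s.toNNReal (i+1)))
      + (∫ s in (a:ℝ)..(b:ℝ), (g s.toNNReal i - g s.toNNReal (i+1)))
      = ∫ s in (0:ℝ)..(b:ℝ), (g s.toNNReal i - g s.toNNReal (i+1)) :=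
    integral_add_adjacent_intervals ((phi_cont hg i).intervalIntegrable _ _)
      ((phi_cont hg i).intervalIntegrable _ _)
  simp only [Fm]
  linarith

lemma exp_int (u : ℝ) : ∫ s in (0:ℝ)..u, Real.exp (40*s) = Real.exp (40*u)/40 - 1/40 := by
  have h : ∀ x ∈ Set.uIcc (0:ℝ) u, HasDerivAt (fun s => Real.exp (40*s)/40)
      (Real.exp (40*x)) x := by
    intro x _
    have h1 : HasDerivAt (fun s : ℝ => 40*s) 40 x := by
      simpa using (hasDerivAt_id x).const_mul (40:ℝ)
    have h2 := (Real.hasDerivAt_exp (40*x)).comp x h1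
    have h3 := h2.div_const (40:ℝ)
    simpa [mul_div_assoc, mul_comm] using h3
  have := integral_eq_sub_of_hasDerivAt h
    ((Real.continuous_exp.comp (continuous_const.mul continuous_id)).intervalIntegrable 0 u)
  rw [this]
  norm_num

/-- Key distance estimate on the drivers. -/
lemma F_dist (hg : ∀ i, Continuous fun t => g t i) (hg' : ∀ i, Continuous fun t => g' t i)
    (G D : ℝ)
    (hbg : ∀ i t, |g t i - g' t i| ≤ G * 4^i * Real.exp (40*t))
    (hbv : ∀ i t, |v t i - v' t i| ≤ D * 4^i * Real.exp (40*t))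
    (i : ℕ) (u : ℝ≥0) :
    |Fm r lam g v i u - Fm r lam g' v' i u| ≤ (G/8 + D/4) * 4^i * Real.exp (40*u) := by
  have hG : 0 ≤ G := le_trans (abs_nonneg _) (by simpa using hbg 0 0)
  have hD : 0 ≤ D := le_trans (abs_nonneg _) (by simpa using hbv 0 0)
  have habs : ∀ s : ℝ, s ∈ Set.Icc (0:ℝ) (u:ℝ) →
      |(g s.toNNReal i - g s.toNNReal (i+1)) - (g' s.toNNReal i - g' s.toNNReal (i+1))|
        ≤ 5 * G * 4^i * Real.exp (40*s) := by
    intro s hs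
    have e1 := hbg i s.toNNReal
    have e2 := hbg (i+1) s.toNNReal
    have hcoe : ((s.toNNReal : ℝ)) = s := Real.coe_toNNReal s hs.1
    rw [hcoe] at e1 e2
    have h4 : (4:ℝ)^(i+1) = 4 * 4^i := by ring
    rw [h4] at e2
    calc |(g s.toNNReal i - g s.toNNReal (i+1)) - (g' s.toNNReal i - g' s.toNNReal (i+1))|
        = |(g s.toNNReal i - g' s.toNNReal i) - (g s.toNNReal (i+1) - g' s.toNNReal (i+1))| := by
          ring_nf
      _ ≤ |g s.toNNReal i - g' s.toNNReal i| + |g s.toNNReal (i+1) - g' s.toNNReal (i+1)| :=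
          abs_sub _ _
      _ ≤ 5 * G * 4^i * Real.exp (40*s) := by nlinarith [Real.exp_pos (40*s)]
  have hint : |∫ s in (0:ℝ)..(u:ℝ),
      ((g s.toNNReal i - g s.toNNReal (i+1)) - (g' s.toNNReal i - g' s.toNNReal (i+1)))|
      ≤ (G/8) * 4^i * Real.exp (40*u) := by
    have hab : (0:ℝ) ≤ (u:ℝ) := u.2
    have hcont : Continuous fun s : ℝ =>
        (g s.toNNReal i - g s.toNNReal (i+1)) - (g' s.toNNReal i - g' s.toNNReal (i+1)) :=
      (phi_cont hg i).sub (phi_cont hg' i)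
    calc |∫ s in (0:ℝ)..(u:ℝ), ((g s.toNNReal i - g s.toNNReal (i+1))
            - (g' s.toNNReal i - g' s.toNNReal (i+1)))|
        ≤ ∫ s in (0:ℝ)..(u:ℝ), |(g s.toNNReal i - g s.toNNReal (i+1))
            - (g' s.toNNReal i - g' s.toNNReal (i+1))| :=
          intervalIntegral.abs_integral_le_integral_abs hab
      _ ≤ ∫ s in (0:ℝ)..(u:ℝ), 5 * G * 4^i * Real.exp (40*s) := by
          refine integral_mono_on hab (hcont.abs.intervalIntegrable _ _)
            ((continuous_const.mul (Real.continuous_exp.comp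
              (continuous_const.mul continuous_id))).intervalIntegrable _ _) habs
      _ = 5 * G * 4^i * (Real.exp (40*(u:ℝ))/40 - 1/40) := by
          rw [integral_const_mul, exp_int]
      _ ≤ (G/8) * 4^i * Real.exp (40*u) := by
          have h1 : (0:ℝ) < 4^i := by positivity
          nlinarith [Real.exp_pos (40*(u:ℝ))]
  have hsplit : Fm r lam g v i u - Fm r lam g' v' i u
      = -(∫ s in (0:ℝ)..(u:ℝ), ((g s.toNNReal i - g s.toNNReal (i+1))
          - (g' s.toNNReal i - g' s.toNNReal (i+1))))
        + (if i = 0 then 0 else v u (i-1) - v' u (i-1)) := by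
    have hIsub : (∫ s in (0:ℝ)..(u:ℝ), ((g s.toNNReal i - g s.toNNReal (i+1))
          - (g' s.toNNReal i - g' s.toNNReal (i+1))))
        = (∫ s in (0:ℝ)..(u:ℝ), (g s.toNNReal i - g s.toNNReal (i+1)))
          - (∫ s in (0:ℝ)..(u:ℝ), (g' s.toNNReal i - g' s.toNNReal (i+1))) :=
      integral_sub ((phi_cont hg i).intervalIntegrable _ _)
        ((phi_cont hg' i).intervalIntegrable _ _)
    simp only [Fm]
    rw [hIsub]
    rcases eq_or_ne i 0 with h | h <;> simp [h] <;> ring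
  rw [hsplit]
  have hvterm : |(if i = 0 then 0 else v u (i-1) - v' u (i-1))|
      ≤ (D/4) * 4^i * Real.exp (40*u) := by
    rcases eq_or_ne i 0 with h | h
    · simp [h]; positivity
    · obtain ⟨j, rfl⟩ := Nat.exists_eq_succ_of_ne_zero h
      simp only [if_neg h, Nat.succ_sub_one]
      have := hbv j u
      have h4 : (4:ℝ)^(j+1) = 4 * 4^j := by ring
      rw [h4]
      linarith
  calc |_ + (if i = 0 then 0 else v u (i-1) - v' u (i-1))|
      ≤ |(-(∫ s in (0:ℝ)..(u:ℝ), ((g s.toNNReal i - g s.toNNReal (i+1))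
          - (g' s.toNNReal i - g' s.toNNReal (i+1)))))|
        + |(if i = 0 then 0 else v u (i-1) - v' u (i-1))| := abs_add_le _ _
    _ ≤ (G/8) * 4^i * Real.exp (40*u) + (D/4) * 4^i * Real.exp (40*u) := by
        rw [abs_neg]; exact add_le_add hint hvterm
    _ = (G/8 + D/4) * 4^i * Real.exp (40*u) := by ring


lemma weight_pos (i : ℕ) (t : ℝ≥0) : (0:ℝ) < 4^i * Real.exp (40*t) := by positivity

lemma one_le_weight (i : ℕ) (t : ℝ≥0) : (1:ℝ) ≤ 4^i * Real.exp (40*t) := by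
  have h1 : (1:ℝ) ≤ 4^i := one_le_pow₀ (by norm_num)
  have h2 : (1:ℝ) ≤ Real.exp (40*t) := Real.one_le_exp (by positivity)
  nlinarith

lemma t_le_weight (i : ℕ) (t : ℝ≥0) : (t:ℝ) ≤ 4^i * Real.exp (40*t) := by
  have h1 : (1:ℝ) ≤ 4^i := one_le_pow₀ (by norm_num)
  have h2 : (40*(t:ℝ)) + 1 ≤ Real.exp (40*t) := Real.add_one_le_exp _
  have h3 : (0:ℝ) ≤ t := t.2
  nlinarith [Real.exp_pos (40*(t:ℝ))]

/-- One-step contraction estimate for the Picard map. -/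
lemma step_est (hg : ∀ i, Continuous fun t => g t i) (hv : ∀ i, Continuous fun t => v t i)
    (hg' : ∀ i, Continuous fun t => g' t i) (hv' : ∀ i, Continuous fun t => v' t i)
    (G D : ℝ)
    (hbg : ∀ i t, |g t i - g' t i| ≤ G * 4^i * Real.exp (40*t))
    (hbv : ∀ i t, |v t i - v' t i| ≤ D * 4^i * Real.exp (40*t)) :
    (∀ i t, |SkorohodMap 1 (Fm r lam g v i) t - SkorohodMap 1 (Fm r lam g' v' i) t|
        ≤ (G/4 + D/2) * 4^i * Real.exp (40*t)) ∧
    (∀ i t, |SkorohodMapHat 1 (Fm r lam g v i) t - SkorohodMapHat 1 (Fm r lam g' v' i) t|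
        ≤ (G/8 + D/4) * 4^i * Real.exp (40*t)) := by
  have hG : 0 ≤ G := le_trans (abs_nonneg _) (by simpa using hbg 0 0)
  have hD : 0 ≤ D := le_trans (abs_nonneg _) (by simpa using hbv 0 0)
  have hFd : ∀ (i : ℕ) (t : ℝ≥0), ∀ s ∈ Set.Icc (0:ℝ≥0) t,
      |Fm r lam g v i s - Fm r lam g' v' i s| ≤ (G/8 + D/4) * 4^i * Real.exp (40*t) := by
    intro i t s hs
    refine le_trans (F_dist hg hg' G D hbg hbv i s) ?_
    have h1 : Real.exp (40*(s:ℝ)) ≤ Real.exp (40*(t:ℝ)) :=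
      Real.exp_le_exp.2 (by
        have : (s:ℝ) ≤ t := NNReal.coe_le_coe.2 hs.2
        linarith)
    have h2 : (0:ℝ) ≤ (G/8 + D/4) * 4^i := by positivity
    nlinarith
  constructor
  · intro i t
    have h := map_dist (Fm_continuous hg hv i) (Fm_continuous hg' hv' i) (hFd i t)
    have he : 2 * ((G/8 + D/4) * 4^i * Real.exp (40*t)) = (G/4 + D/2) * 4^i * Real.exp (40*t) := by
      ring
    linarith [h, he.le]
  · intro i t
    exact hat_dist (Fm_continuous hg hv i) (Fm_continuous hg' hv' i) (hFd i t)

section Iteration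

variable (r lam)

/-- The Picard map. -/
noncomputable def Phi : ((ℝ≥0 → ℕ → ℝ) × (ℝ≥0 → ℕ → ℝ)) → ((ℝ≥0 → ℕ → ℝ) × (ℝ≥0 → ℕ → ℝ)) :=
  fun x => (fun t i => SkorohodMap 1 (Fm r lam x.1 x.2 i) t,
            fun t i => SkorohodMapHat 1 (Fm r lam x.1 x.2 i) t)

/-- The Picard iterates, started from the constant path. -/
noncomputable def seq : ℕ → ((ℝ≥0 → ℕ → ℝ) × (ℝ≥0 → ℕ → ℝ)) :=
  fun n => (Phi r lam)^[n] (fun _ i => r i, fun _ _ => 0)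

lemma seq_succ (n : ℕ) : seq r lam (n+1) = Phi r lam (seq r lam n) := by
  simp [seq, Function.iterate_succ_apply']

lemma seq_cont (n : ℕ) : (∀ i, Continuous fun t => (seq r lam n).1 t i)
    ∧ (∀ i, Continuous fun t => (seq r lam n).2 t i) := by
  induction n with
  | zero => exact ⟨fun i => continuous_const, fun i => continuous_const⟩
  | succ n ih =>
      rw [seq_succ]
      exact ⟨fun i => map_continuous (Fm_continuous ih.1 ih.2 i),
             fun i => hat_continuous (Fm_continuous ih.1 ih.2 i)⟩

lemma seq_diff (hr : MemLdown r) (hlam : 0 < lam) (n : ℕ) :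
    (∀ i t, |(seq r lam (n+1)).1 t i - (seq r lam n).1 t i|
        ≤ (2*(1+lam)) * (1/2)^n * 4^i * Real.exp (40*t)) ∧
    (∀ i t, |(seq r lam (n+1)).2 t i - (seq r lam n).2 t i|
        ≤ ((1+lam)) * (1/2)^n * 4^i * Real.exp (40*t)) := by
  induction n with
  | zero =>
      have hFr : ∀ (i : ℕ) (u : ℝ≥0), |Fm r lam (fun _ i => r i) (fun _ _ => 0) i u - r i|
          ≤ (1+lam) * u := by
        intro i u
        have hI : (∫ s in (0:ℝ)..(u:ℝ), ((fun _ i => r i) (Real.toNNReal s) i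
            - (fun _ i => r i) (Real.toNNReal s) (i+1))) = (u:ℝ) * (r i - r (i+1)) := by
          simp [intervalIntegral.integral_const]
          ring
        have hri : |r i - r (i+1)| ≤ 1 := by
          have h1 := (hr.1 i).1; have h2 := (hr.1 i).2
          have h3 := (hr.1 (i+1)).1; have h4 := (hr.1 (i+1)).2
          rw [abs_le]; constructor <;> linarith
        have hu : (0:ℝ) ≤ u := u.2
        simp only [Fm, hI]
        rcases eq_or_ne i 0 with h | h
        · rw [if_pos h]
          have : r i - (u:ℝ) * (r i - r (i+1)) + lam * u - r i
              = -((u:ℝ) * (r i - r (i+1))) + lam * u := by ring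
          have habs := abs_mul (u:ℝ) (r i - r (i+1))
          calc |r i - (u:ℝ) * (r i - r (i+1)) + lam * (u:ℝ) - r i|
              ≤ |(u:ℝ) * (r i - r (i+1))| + |lam * u| := by
                rw [this]; exact (abs_add_le _ _).trans (by rw [abs_neg])
            _ ≤ (u:ℝ) * 1 + lam * u := by
                rw [abs_mul, abs_mul, abs_of_nonneg hu, abs_of_nonneg hlam.le]
                have := mul_le_mul_of_nonneg_left hri hu
                linarith
            _ = (1+lam) * u := by ring
        · rw [if_neg h]
          calc |r i - (u:ℝ) * (r i - r (i+1)) + 0 - r i|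
              = |(u:ℝ) * (r i - r (i+1))| := by rw [abs_sub_comm]; ring_nf
            _ ≤ (u:ℝ) * 1 := by
                rw [abs_mul, abs_of_nonneg hu]
                exact mul_le_mul_of_nonneg_left hri hu
            _ ≤ (1+lam) * u := by nlinarith
      constructor
      · intro i t
        have hc0 : Continuous (Fm r lam (fun _ i => r i) (fun _ _ => 0) i) :=
          Fm_continuous (g := fun _ i => r i) (v := fun _ _ => 0)
            (fun _ => continuous_const) (fun _ => continuous_const) i
        have hhat : SkorohodMapHat 1 (Fm r lam (fun _ i => r i) (fun _ _ => 0) i) t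
            ≤ (1+lam) * t := by
          refine hat_le fun s hs => ?_
          have h1 := hFr i s
          have h2 := (hr.1 i).2
          have hst : (s:ℝ) ≤ t := NNReal.coe_le_coe.2 hs.2
          have h3 : (0:ℝ) ≤ (1+lam) := by linarith
          have h4 : (1+lam) * (s:ℝ) ≤ (1+lam) * t := by nlinarith [s.2]
          rcases abs_le.1 h1 with ⟨_, hub⟩
          rcases max_cases (Fm r lam (fun _ i => r i) (fun _ _ => 0) i s - 1) (0:ℝ) with
            ⟨hm, _⟩ | ⟨hm, _⟩
          · rw [hm]; linarith
          · rw [hm]; positivity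
        have hmap : |SkorohodMap 1 (Fm r lam (fun _ i => r i) (fun _ _ => 0) i) t - r i|
            ≤ 2 * ((1+lam)*t) := by
          rw [map_hat]
          have h1 := hFr i t
          have h2 := hat_nonneg hc0 t
          rcases abs_le.1 h1 with ⟨hlb, hub⟩
          rw [abs_le]; constructor <;> nlinarith [hhat]
        show |(Phi r lam (seq r lam 0)).1 t i - (seq r lam 0).1 t i| ≤ _
        · have hseq0 : (seq r lam 0) = (fun _ i => r i, fun _ _ => 0) := rfl
          rw [hseq0]
          simp only [Phi]
          have hw := t_le_weight i t
          have h3 : (0:ℝ) ≤ 1 + lam := by linarith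
          calc |SkorohodMap 1 (Fm r lam (fun _ i => r i) (fun _ _ => 0) i) t - r i|
              ≤ 2 * ((1+lam)*t) := hmap
            _ ≤ 2*(1+lam) * (4^i * Real.exp (40*t)) := by nlinarith
            _ = 2*(1+lam) * (1/2)^0 * 4^i * Real.exp (40*t) := by ring
      · intro i t
        have hc0 : Continuous (Fm r lam (fun _ i => r i) (fun _ _ => 0) i) :=
          Fm_continuous (g := fun _ i => r i) (v := fun _ _ => 0)
            (fun _ => continuous_const) (fun _ => continuous_const) i
        have hhat : SkorohodMapHat 1 (Fm r lam (fun _ i => r i) (fun _ _ => 0) i) t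
            ≤ (1+lam) * t := by
          refine hat_le fun s hs => ?_
          have h1 := hFr i s
          have h2 := (hr.1 i).2
          have hst : (s:ℝ) ≤ t := NNReal.coe_le_coe.2 hs.2
          have h3 : (0:ℝ) ≤ (1+lam) := by linarith
          have h4 : (1+lam) * (s:ℝ) ≤ (1+lam) * t := by nlinarith [s.2]
          rcases abs_le.1 h1 with ⟨_, hub⟩
          rcases max_cases (Fm r lam (fun _ i => r i) (fun _ _ => 0) i s - 1) (0:ℝ) with
            ⟨hm, _⟩ | ⟨hm, _⟩
          · rw [hm]; linarith
          · rw [hm]; positivity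
        show |(Phi r lam (seq r lam 0)).2 t i - (seq r lam 0).2 t i| ≤ _
        · have hseq0 : (seq r lam 0) = (fun _ i => r i, fun _ _ => 0) := rfl
          rw [hseq0]
          simp only [Phi]
          have hw := t_le_weight i t
          have h2 := hat_nonneg hc0 t
          have h3 : (0:ℝ) ≤ 1 + lam := by linarith
          calc |SkorohodMapHat 1 (Fm r lam (fun _ i => r i) (fun _ _ => 0) i) t - 0|
              = SkorohodMapHat 1 (Fm r lam (fun _ i => r i) (fun _ _ => 0) i) t := by
                rw [sub_zero, abs_of_nonneg h2]
            _ ≤ (1+lam) * t := hhat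
            _ ≤ (1+lam) * (4^i * Real.exp (40*t)) := by nlinarith
            _ = (1+lam) * (1/2)^0 * 4^i * Real.exp (40*t) := by ring
  | succ n ih =>
      have hc := seq_cont r lam n
      have hc' := seq_cont r lam (n+1)
      have hst := step_est (r := r) (lam := lam) hc'.1 hc'.2 hc.1 hc.2
        (2*(1+lam) * (1/2)^n) ((1+lam) * (1/2)^n)
        (fun i t => by
          have := (ih.1) i t
          calc |(seq r lam (n+1)).1 t i - (seq r lam n).1 t i|
              ≤ 2*(1+lam) * (1/2)^n * 4^i * Real.exp (40*t) := this
            _ = (2*(1+lam) * (1/2)^n) * 4^i * Real.exp (40*t) := by ring)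
        (fun i t => by
          have := (ih.2) i t
          calc |(seq r lam (n+1)).2 t i - (seq r lam n).2 t i|
              ≤ (1+lam) * (1/2)^n * 4^i * Real.exp (40*t) := this
            _ = ((1+lam) * (1/2)^n) * 4^i * Real.exp (40*t) := by ring)
      constructor
      · intro i t
        have h := hst.1 i t
        rw [seq_succ r lam (n+1), seq_succ r lam n]
        rw [seq_succ r lam n] at h
        have he : (2*(1+lam) * (1/2)^n)/4 + ((1+lam) * (1/2)^n)/2
            = 2*(1+lam) * (1/2)^(n+1) := by ring
        calc |(Phi r lam (Phi r lam (seq r lam n))).1 t i - (Phi r lam (seq r lam n)).1 t i|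
            ≤ ((2*(1+lam) * (1/2)^n)/4 + ((1+lam) * (1/2)^n)/2) * 4^i * Real.exp (40*t) := h
          _ = 2*(1+lam) * (1/2)^(n+1) * 4^i * Real.exp (40*t) := by rw [he]
      · intro i t
        have h := hst.2 i t
        rw [seq_succ r lam (n+1), seq_succ r lam n]
        rw [seq_succ r lam n] at h
        have he : (2*(1+lam) * (1/2)^n)/8 + ((1+lam) * (1/2)^n)/4
            = (1+lam) * (1/2)^(n+1) := by ring
        calc |(Phi r lam (Phi r lam (seq r lam n))).2 t i - (Phi r lam (seq r lam n)).2 t i|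
            ≤ ((2*(1+lam) * (1/2)^n)/8 + ((1+lam) * (1/2)^n)/4) * 4^i * Real.exp (40*t) := h
          _ = (1+lam) * (1/2)^(n+1) * 4^i * Real.exp (40*t) := by rw [he]

end Iteration

lemma exists_fixed (hr : MemLdown r) (hlam : 0 < lam) :
    ∃ g v : ℝ≥0 → ℕ → ℝ,
      (∀ i, Continuous fun t => g t i) ∧ (∀ i, Continuous fun t => v t i) ∧
      (∀ i t, |g t i - r i| ≤ 8*(1+lam) * 4^i * Real.exp (40*t)) ∧
      (∀ i t, |v t i| ≤ 8*(1+lam) * 4^i * Real.exp (40*t)) ∧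
      (∀ i t, g t i = SkorohodMap 1 (Fm r lam g v i) t ∧
              v t i = SkorohodMapHat 1 (Fm r lam g v i) t) := by
  have hlam0 : (0:ℝ) ≤ 1 + lam := by linarith
  -- gap bounds
  have gap : ∀ n k : ℕ, (∀ i t, |(seq r lam (n+k)).1 t i - (seq r lam n).1 t i|
      ≤ 4*(1+lam) * ((1/2)^n - (1/2)^(n+k)) * 4^i * Real.exp (40*t)) ∧
      (∀ i t, |(seq r lam (n+k)).2 t i - (seq r lam n).2 t i|
      ≤ 2*(1+lam) * ((1/2)^n - (1/2)^(n+k)) * 4^i * Real.exp (40*t)) := by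
    intro n k
    induction k with
    | zero => simp
    | succ k ih =>
        have hd := seq_diff r lam hr hlam (n+k)
        constructor
        · intro i t
          have h1 := ih.1 i t
          have h2 := hd.1 i t
          have key : (2*(1+lam)) * (1/2)^(n+k) + 4*(1+lam) * ((1/2)^n - (1/2)^(n+k))
              = 4*(1+lam) * ((1/2)^n - (1/2)^(n+k+1)) := by ring
          have habs : |(seq r lam (n+k+1)).1 t i - (seq r lam n).1 t i|
              ≤ |(seq r lam (n+k+1)).1 t i - (seq r lam (n+k)).1 t i|
                + |(seq r lam (n+k)).1 t i - (seq r lam n).1 t i| := abs_sub_le _ _ _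
          have : (n + (k+1)) = ((n+k)+1) := by ring
          rw [this]
          calc |(seq r lam ((n+k)+1)).1 t i - (seq r lam n).1 t i|
              ≤ (2*(1+lam)) * (1/2)^(n+k) * 4^i * Real.exp (40*t)
                + 4*(1+lam) * ((1/2)^n - (1/2)^(n+k)) * 4^i * Real.exp (40*t) := by
                refine le_trans habs (add_le_add h2 h1)
            _ = 4*(1+lam) * ((1/2)^n - (1/2)^(n+k+1)) * 4^i * Real.exp (40*t) := by
                rw [← key]; ring
        · intro i t
          have h1 := ih.2 i t
          have h2 := hd.2 i t
          have key : ((1+lam)) * (1/2)^(n+k) + 2*(1+lam) * ((1/2)^n - (1/2)^(n+k))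
              = 2*(1+lam) * ((1/2)^n - (1/2)^(n+k+1)) := by ring
          have habs : |(seq r lam (n+k+1)).2 t i - (seq r lam n).2 t i|
              ≤ |(seq r lam (n+k+1)).2 t i - (seq r lam (n+k)).2 t i|
                + |(seq r lam (n+k)).2 t i - (seq r lam n).2 t i| := abs_sub_le _ _ _
          have : (n + (k+1)) = ((n+k)+1) := by ring
          rw [this]
          calc |(seq r lam ((n+k)+1)).2 t i - (seq r lam n).2 t i|
              ≤ ((1+lam)) * (1/2)^(n+k) * 4^i * Real.exp (40*t)
                + 2*(1+lam) * ((1/2)^n - (1/2)^(n+k)) * 4^i * Real.exp (40*t) := by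
                refine le_trans habs (add_le_add h2 h1)
            _ = 2*(1+lam) * ((1/2)^n - (1/2)^(n+k+1)) * 4^i * Real.exp (40*t) := by
                rw [← key]; ring
  have half_nonneg : ∀ m : ℕ, (0:ℝ) ≤ (1/2)^m := fun m => by positivity
  have base_nonneg : ∀ (n i : ℕ) (t : ℝ≥0), (0:ℝ) ≤ (1+lam) * (1/2)^n * 4^i * Real.exp (40*t) :=
    fun n i t => mul_nonneg (mul_nonneg (mul_nonneg hlam0 (by positivity))
      (by positivity)) (Real.exp_pos _).le
  have gap' : ∀ n m : ℕ, n ≤ m → (∀ i t, |(seq r lam m).1 t i - (seq r lam n).1 t i|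
      ≤ 4*(1+lam) * (1/2)^n * 4^i * Real.exp (40*t)) ∧
      (∀ i t, |(seq r lam m).2 t i - (seq r lam n).2 t i|
      ≤ 2*(1+lam) * (1/2)^n * 4^i * Real.exp (40*t)) := by
    intro n m hnm
    obtain ⟨k, rfl⟩ := Nat.exists_eq_add_of_le hnm
    have h := gap n k
    have hmono : ∀ (c : ℝ), 0 ≤ c → ∀ i t,
        c * ((1/2)^n - (1/2)^(n+k)) * 4^i * Real.exp (40*t)
          ≤ c * (1/2)^n * 4^i * Real.exp (40*t) := by
      intro c hc i t
      have h1 : c * ((1/2:ℝ)^n - (1/2)^(n+k)) ≤ c * (1/2)^n := by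
        have := half_nonneg (n+k)
        nlinarith
      have h2 : (0:ℝ) < 4^i * Real.exp (40*t) := by positivity
      calc c * ((1/2:ℝ)^n - (1/2)^(n+k)) * 4^i * Real.exp (40*t)
          = (c * ((1/2:ℝ)^n - (1/2)^(n+k))) * (4^i * Real.exp (40*t)) := by ring
        _ ≤ (c * (1/2)^n) * (4^i * Real.exp (40*t)) := by nlinarith
        _ = c * (1/2)^n * 4^i * Real.exp (40*t) := by ring
    exact ⟨fun i t => le_trans (h.1 i t) (hmono _ (by linarith) i t),
           fun i t => le_trans (h.2 i t) (hmono _ (by linarith) i t)⟩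
  -- convergence
  have hcauchy1 : ∀ (t : ℝ≥0) (i : ℕ), ∃ L, Tendsto (fun n => (seq r lam n).1 t i) atTop (𝓝 L) := by
    intro t i
    refine cauchySeq_tendsto_of_complete (cauchySeq_of_le_geometric (1/2)
      (4*(1+lam) * 4^i * Real.exp (40*t)) (by norm_num) (fun n => ?_))
    rw [Real.dist_eq, abs_sub_comm]
    have := (seq_diff r lam hr hlam n).1 i t
    calc |(seq r lam (n+1)).1 t i - (seq r lam n).1 t i|
        ≤ (2*(1+lam)) * (1/2)^n * 4^i * Real.exp (40*t) := this
      _ ≤ 4*(1+lam) * 4^i * Real.exp (40*t) * (1/2)^n := by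
          nlinarith [base_nonneg n i t]
  have hcauchy2 : ∀ (t : ℝ≥0) (i : ℕ), ∃ L, Tendsto (fun n => (seq r lam n).2 t i) atTop (𝓝 L) := by
    intro t i
    refine cauchySeq_tendsto_of_complete (cauchySeq_of_le_geometric (1/2)
      (2*(1+lam) * 4^i * Real.exp (40*t)) (by norm_num) (fun n => ?_))
    rw [Real.dist_eq, abs_sub_comm]
    have := (seq_diff r lam hr hlam n).2 i t
    calc |(seq r lam (n+1)).2 t i - (seq r lam n).2 t i|
        ≤ ((1+lam)) * (1/2)^n * 4^i * Real.exp (40*t) := this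
      _ ≤ 2*(1+lam) * 4^i * Real.exp (40*t) * (1/2)^n := by
          nlinarith [base_nonneg n i t]
  choose G hG using hcauchy1
  choose V hV using hcauchy2
  set g : ℝ≥0 → ℕ → ℝ := fun t i => G t i with hgdef
  set v : ℝ≥0 → ℕ → ℝ := fun t i => V t i with hvdef
  -- tail bounds
  have tail1 : ∀ n i t, |g t i - (seq r lam n).1 t i|
      ≤ 4*(1+lam) * (1/2)^n * 4^i * Real.exp (40*t) := by
    intro n i t
    have htend : Tendsto (fun m => |(seq r lam m).1 t i - (seq r lam n).1 t i|) atTop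
        (𝓝 |g t i - (seq r lam n).1 t i|) :=
      (Tendsto.sub (hG t i) tendsto_const_nhds).abs
    refine le_of_tendsto htend (eventually_atTop.2 ⟨n, fun m hm => (gap' n m hm).1 i t⟩)
  have tail2 : ∀ n i t, |v t i - (seq r lam n).2 t i|
      ≤ 2*(1+lam) * (1/2)^n * 4^i * Real.exp (40*t) := by
    intro n i t
    have htend : Tendsto (fun m => |(seq r lam m).2 t i - (seq r lam n).2 t i|) atTop
        (𝓝 |v t i - (seq r lam n).2 t i|) :=
      (Tendsto.sub (hV t i) tendsto_const_nhds).abs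
    refine le_of_tendsto htend (eventually_atTop.2 ⟨n, fun m hm => (gap' n m hm).2 i t⟩)
  -- continuity of the limits
  have hcont : ∀ (F : ℕ → ℝ≥0 → ℝ) (L : ℝ≥0 → ℝ) (c : ℝ), 0 ≤ c →
      (∀ n, Continuous (F n)) →
      (∀ n (t : ℝ≥0), |L t - F n t| ≤ c * (1/2)^n * Real.exp (40*t)) →
      Continuous L := by
    intro F L c hc hFc hFL
    rw [continuous_iff_continuousAt]
    intro t₀
    have hT : Set.Iic (t₀ + 1) ∈ 𝓝 t₀ := Iic_mem_nhds (lt_add_of_pos_right t₀ one_pos)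
    refine ContinuousOn.continuousAt ?_ hT
    have hunif : TendstoUniformlyOn (fun n t => F n t) L atTop (Set.Iic (t₀+1)) := by
      rw [Metric.tendstoUniformlyOn_iff]
      intro ε hε
      have hgeo : Tendsto (fun n : ℕ => c * Real.exp (40*(t₀+1:ℝ≥0)) * (1/2)^n) atTop (𝓝 0) := by
        have := tendsto_pow_atTop_nhds_zero_of_lt_one (by norm_num : (0:ℝ) ≤ 1/2)
          (by norm_num : (1/2:ℝ) < 1)
        simpa using this.const_mul (c * Real.exp (40*(t₀+1:ℝ≥0)))
      have hev := (hgeo.eventually (eventually_lt_nhds hε))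
      filter_upwards [hev] with n hn t ht
      rw [Real.dist_eq]
      have h1 := hFL n t
      have h2 : Real.exp (40*(t:ℝ)) ≤ Real.exp (40*(t₀+1:ℝ≥0)) := by
        apply Real.exp_le_exp.2
        have : (t:ℝ) ≤ ((t₀+1:ℝ≥0):ℝ) := NNReal.coe_le_coe.2 ht
        linarith
      have h3 : (0:ℝ) ≤ c * (1/2)^n := by positivity
      calc |L t - F n t| ≤ c * (1/2)^n * Real.exp (40*(t:ℝ)) := h1
        _ ≤ c * (1/2)^n * Real.exp (40*(t₀+1:ℝ≥0)) := by nlinarith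
        _ = c * Real.exp (40*(t₀+1:ℝ≥0)) * (1/2)^n := by ring
        _ < ε := hn
    exact hunif.continuousOn (Filter.Eventually.of_forall (fun n => (hFc n).continuousOn)).frequently
  have hgc : ∀ i, Continuous fun t => g t i := by
    intro i
    refine hcont (fun n t => (seq r lam n).1 t i) (fun t => g t i) (4*(1+lam) * 4^i)
      (by positivity) (fun n => (seq_cont r lam n).1 i) (fun n t => ?_)
    calc |g t i - (seq r lam n).1 t i| ≤ 4*(1+lam) * (1/2)^n * 4^i * Real.exp (40*t) :=
        tail1 n i t
      _ = 4*(1+lam) * 4^i * (1/2)^n * Real.exp (40*t) := by ring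
  have hvc : ∀ i, Continuous fun t => v t i := by
    intro i
    refine hcont (fun n t => (seq r lam n).2 t i) (fun t => v t i) (2*(1+lam) * 4^i)
      (by positivity) (fun n => (seq_cont r lam n).2 i) (fun n t => ?_)
    calc |v t i - (seq r lam n).2 t i| ≤ 2*(1+lam) * (1/2)^n * 4^i * Real.exp (40*t) :=
        tail2 n i t
      _ = 2*(1+lam) * 4^i * (1/2)^n * Real.exp (40*t) := by ring
  refine ⟨g, v, hgc, hvc, ?_, ?_, ?_⟩
  · intro i t
    have h1 := tail1 0 i t
    simp only [pow_zero, mul_one] at h1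
    have : (seq r lam 0).1 t i = r i := rfl
    rw [this] at h1
    have hw : (0:ℝ) < 4^i * Real.exp (40*t) := by positivity
    calc |g t i - r i| ≤ 4*(1+lam) * (1/2)^0 * 4^i * Real.exp (40*t) := by
          simpa using h1
      _ ≤ 8*(1+lam) * 4^i * Real.exp (40*t) := by nlinarith
  · intro i t
    have h1 := tail2 0 i t
    have : (seq r lam 0).2 t i = 0 := rfl
    rw [this, sub_zero] at h1
    have hw : (0:ℝ) < 4^i * Real.exp (40*t) := by positivity
    calc |v t i| ≤ 2*(1+lam) * (1/2)^0 * 4^i * Real.exp (40*t) := h1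
      _ ≤ 8*(1+lam) * 4^i * Real.exp (40*t) := by nlinarith
  · -- fixed point property
    intro i t
    have key : ∀ n : ℕ,
        |g t i - SkorohodMap 1 (Fm r lam g v i) t| ≤ 12*(1+lam) * (1/2)^n * 4^i * Real.exp (40*t)
        ∧ |v t i - SkorohodMapHat 1 (Fm r lam g v i) t|
          ≤ 12*(1+lam) * (1/2)^n * 4^i * Real.exp (40*t) := by
      intro n
      have hst := step_est (r := r) (lam := lam) (seq_cont r lam n).1 (seq_cont r lam n).2
        hgc hvc (4*(1+lam) * (1/2)^n) (2*(1+lam) * (1/2)^n)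
        (fun j s => by
          have := tail1 n j s
          calc |(seq r lam n).1 s j - g s j| = |g s j - (seq r lam n).1 s j| := by
                rw [abs_sub_comm]
            _ ≤ 4*(1+lam) * (1/2)^n * 4^j * Real.exp (40*s) := this
            _ = (4*(1+lam) * (1/2)^n) * 4^j * Real.exp (40*s) := by ring)
        (fun j s => by
          have := tail2 n j s
          calc |(seq r lam n).2 s j - v s j| = |v s j - (seq r lam n).2 s j| := by
                rw [abs_sub_comm]
            _ ≤ 2*(1+lam) * (1/2)^n * 4^j * Real.exp (40*s) := this
            _ = (2*(1+lam) * (1/2)^n) * 4^j * Real.exp (40*s) := by ring)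
      have hg1 : |g t i - (seq r lam (n+1)).1 t i| ≤ 4*(1+lam) * (1/2)^n * 4^i * Real.exp (40*t) := by
        have := tail1 (n+1) i t
        have hmono : 4*(1+lam) * (1/2)^(n+1) * 4^i * Real.exp (40*t)
            ≤ 4*(1+lam) * (1/2)^n * 4^i * Real.exp (40*t) := by
          have h1 : ((1/2:ℝ))^(n+1) ≤ (1/2)^n := by
            apply pow_le_pow_of_le_one <;> norm_num
          have h2 : (0:ℝ) < 4^i * Real.exp (40*t) := by positivity
          nlinarith [mul_le_mul_of_nonneg_right (mul_le_mul_of_nonneg_left h1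
            (by linarith : (0:ℝ) ≤ 4*(1+lam))) h2.le]
        exact le_trans this hmono
      have hv1 : |v t i - (seq r lam (n+1)).2 t i| ≤ 2*(1+lam) * (1/2)^n * 4^i * Real.exp (40*t) := by
        have := tail2 (n+1) i t
        have hmono : 2*(1+lam) * (1/2)^(n+1) * 4^i * Real.exp (40*t)
            ≤ 2*(1+lam) * (1/2)^n * 4^i * Real.exp (40*t) := by
          have h1 : ((1/2:ℝ))^(n+1) ≤ (1/2)^n := by
            apply pow_le_pow_of_le_one <;> norm_num
          have h2 : (0:ℝ) < 4^i * Real.exp (40*t) := by positivity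
          nlinarith [mul_le_mul_of_nonneg_right (mul_le_mul_of_nonneg_left h1
            (by linarith : (0:ℝ) ≤ 2*(1+lam))) h2.le]
        exact le_trans this hmono
      have hseqn1 : (seq r lam (n+1)).1 t i
          = SkorohodMap 1 (Fm r lam (seq r lam n).1 (seq r lam n).2 i) t := by
        rw [seq_succ]; rfl
      have hseqn2 : (seq r lam (n+1)).2 t i
          = SkorohodMapHat 1 (Fm r lam (seq r lam n).1 (seq r lam n).2 i) t := by
        rw [seq_succ]; rfl
      constructor
      · have h2 := hst.1 i t
        have htr : |g t i - SkorohodMap 1 (Fm r lam g v i) t|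
            ≤ |g t i - (seq r lam (n+1)).1 t i|
              + |SkorohodMap 1 (Fm r lam (seq r lam n).1 (seq r lam n).2 i) t
                  - SkorohodMap 1 (Fm r lam g v i) t| := by
          rw [hseqn1] at hg1 ⊢
          exact abs_sub_le _ _ _
        have hee : (4*(1+lam) * (1/2)^n)/4 + (2*(1+lam) * (1/2)^n)/2
            = 2*(1+lam)*(1/2)^n := by ring
        calc |g t i - SkorohodMap 1 (Fm r lam g v i) t|
            ≤ 4*(1+lam) * (1/2)^n * 4^i * Real.exp (40*t)
              + ((4*(1+lam) * (1/2)^n)/4 + (2*(1+lam) * (1/2)^n)/2) * 4^i * Real.exp (40*t) := by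
              refine le_trans htr (add_le_add hg1 h2)
          _ ≤ 12*(1+lam) * (1/2)^n * 4^i * Real.exp (40*t) := by
              rw [hee]
              nlinarith [base_nonneg n i t]
      · have h2 := hst.2 i t
        have htr : |v t i - SkorohodMapHat 1 (Fm r lam g v i) t|
            ≤ |v t i - (seq r lam (n+1)).2 t i|
              + |SkorohodMapHat 1 (Fm r lam (seq r lam n).1 (seq r lam n).2 i) t
                  - SkorohodMapHat 1 (Fm r lam g v i) t| := by
          rw [hseqn2] at hv1 ⊢
          exact abs_sub_le _ _ _
        have hee : (4*(1+lam) * (1/2)^n)/8 + (2*(1+lam) * (1/2)^n)/4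
            = (1+lam)*(1/2)^n := by ring
        calc |v t i - SkorohodMapHat 1 (Fm r lam g v i) t|
            ≤ 2*(1+lam) * (1/2)^n * 4^i * Real.exp (40*t)
              + ((4*(1+lam) * (1/2)^n)/8 + (2*(1+lam) * (1/2)^n)/4) * 4^i * Real.exp (40*t) := by
              refine le_trans htr (add_le_add hv1 h2)
          _ ≤ 12*(1+lam) * (1/2)^n * 4^i * Real.exp (40*t) := by
              rw [hee]
              nlinarith [base_nonneg n i t]
    have hzero : Tendsto (fun n : ℕ => 12*(1+lam) * (1/2)^n * 4^i * Real.exp (40*(t:ℝ))) atTop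
        (𝓝 0) := by
      have h0 := tendsto_pow_atTop_nhds_zero_of_lt_one (by norm_num : (0:ℝ) ≤ 1/2)
        (by norm_num : (1/2:ℝ) < 1)
      have := h0.const_mul (12*(1+lam))
      have h2 := this.mul_const ((4:ℝ)^i)
      have h3 := h2.mul_const (Real.exp (40*(t:ℝ)))
      simpa using h3
    constructor
    · have h1 : |g t i - SkorohodMap 1 (Fm r lam g v i) t| ≤ 0 :=
        ge_of_tendsto' hzero (fun n => (key n).1)
      have := abs_nonneg (g t i - SkorohodMap 1 (Fm r lam g v i) t)
      have : |g t i - SkorohodMap 1 (Fm r lam g v i) t| = 0 := le_antisymm h1 this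
      linarith [abs_eq_zero.1 this, sub_eq_zero.2 (rfl : g t i = g t i)] 
    · have h1 : |v t i - SkorohodMapHat 1 (Fm r lam g v i) t| ≤ 0 :=
        ge_of_tendsto' hzero (fun n => (key n).2)
      have h2 := abs_nonneg (v t i - SkorohodMapHat 1 (Fm r lam g v i) t)
      have h3 : |v t i - SkorohodMapHat 1 (Fm r lam g v i) t| = 0 := le_antisymm h1 h2
      have := abs_eq_zero.1 h3
      linarith

/-- Segment step for the comparison argument. -/
lemma seg_nonneg (d : ℕ → ℝ≥0 → ℝ) (hc : ∀ i, Continuous (d i))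
    (lo hi : ℝ≥0) (hlohi : lo ≤ hi) (hlen : (hi:ℝ) ≤ (lo:ℝ) + 1/8)
    (C : ℝ) (hC : 0 ≤ C) (hbd : ∀ i, ∀ t, t ≤ hi → -(C * 4^i) ≤ d i t)
    (hstart : ∀ i, ∀ t, t ≤ lo → 0 ≤ d i t)
    (hkey : ∀ i, ∀ a b : ℝ≥0, a ≤ b → lo ≤ a → b ≤ hi → 0 ≤ d i a →
      (∀ u ∈ Set.Ioc a b, d i u < 0) →
      (∫ u in (a:ℝ)..(b:ℝ), d (i+1) u.toNNReal) ≤ d i b) :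
    ∀ i, ∀ t ∈ Set.Icc lo hi, 0 ≤ d i t := by
  classical
  set S : Set ℝ :=
    Set.range (fun p : ℕ × (Set.Icc lo hi) => min ((1/4:ℝ)^p.1 * d p.1 p.2) 0) with hS
  have hSne : S.Nonempty := ⟨_, ⟨(0, ⟨lo, le_rfl, hlohi⟩), rfl⟩⟩
  have hw4 : ∀ i : ℕ, ((1/4:ℝ))^i * 4^i = 1 := by
    intro i; rw [← mul_pow]; norm_num
  have hwpos : ∀ i : ℕ, (0:ℝ) < (1/4:ℝ)^i := fun i => by positivity
  have hbddS : BddBelow S := by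
    refine ⟨-C, ?_⟩
    rintro x ⟨⟨i, s, hs⟩, rfl⟩
    simp only
    have h1 := hbd i s hs.2
    have h2 : (1/4:ℝ)^i * (-(C * 4^i)) ≤ (1/4:ℝ)^i * d i s :=
      mul_le_mul_of_nonneg_left h1 (hwpos i).le
    have h3 : (1/4:ℝ)^i * (-(C * 4^i)) = -C := by
      calc (1/4:ℝ)^i * (-(C * 4^i)) = -C * ((1/4:ℝ)^i * 4^i) := by ring
        _ = -C := by rw [hw4 i]; ring
    rw [h3] at h2
    exact le_min h2 (by linarith)
  set m := sInf S with hm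
  have hmle : ∀ x ∈ S, m ≤ x := fun x hx => csInf_le hbddS hx
  have hm0 : m ≤ 0 := by
    refine le_trans (hmle _ ⟨(0, ⟨lo, le_rfl, hlohi⟩), rfl⟩) (min_le_right _ _)
  have hdm : ∀ (j : ℕ) (u : ℝ≥0), lo ≤ u → u ≤ hi → m * 4^j ≤ d j u := by
    intro j u h1 h2
    have hmem : min ((1/4:ℝ)^j * d j u) 0 ∈ S := ⟨(j, ⟨u, h1, h2⟩), rfl⟩
    have h3 : m ≤ (1/4:ℝ)^j * d j u := le_trans (hmle _ hmem) (min_le_left _ _)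
    have h4 := mul_le_mul_of_nonneg_right h3 (by positivity : (0:ℝ) ≤ 4^j)
    have h5 : (1/4:ℝ)^j * d j u * 4^j = d j u := by
      calc (1/4:ℝ)^j * d j u * 4^j = ((1/4:ℝ)^j * 4^j) * d j u := by ring
        _ = d j u := by rw [hw4 j]; ring
    rw [h5] at h4
    exact h4
  have hclaim : ∀ x ∈ S, m/2 ≤ x := by
    rintro x ⟨⟨i, s, hs⟩, rfl⟩
    simp only
    by_cases hpos : 0 ≤ d i s
    · have : (0:ℝ) ≤ min ((1/4:ℝ)^i * d i s) 0 ∨ min ((1/4:ℝ)^i * d i s) 0 = 0 := by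
        right
        rw [min_eq_right]
        exact mul_nonneg (hwpos i).le hpos
      rw [min_eq_right (mul_nonneg (hwpos i).le hpos)]
      linarith
    · push_neg at hpos
      -- the set of times in [lo, s] where d i is nonnegative
      set A : Set ℝ≥0 := {u ∈ Set.Icc lo s | 0 ≤ d i u} with hA
      have hAne : A.Nonempty := ⟨lo, ⟨le_rfl, hs.1⟩, hstart i lo le_rfl⟩
      have hAclosed : IsClosed A := by
        have : A = Set.Icc lo s ∩ (d i)⁻¹' (Set.Ici 0) := by
          ext u; simp [hA, Set.mem_Icc, and_assoc]
        rw [this]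
        exact isClosed_Icc.inter (IsClosed.preimage (hc i) isClosed_Ici)
      have hAcomp : IsCompact A := (isCompact_Icc (a := lo) (b := s)).of_isClosed_subset
        hAclosed (fun u hu => hu.1)
      have haA : sSup A ∈ A := hAcomp.sSup_mem hAne
      set a := sSup A with ha
      have halo : lo ≤ a := haA.1.1
      have has : a ≤ s := haA.1.2
      have hda : 0 ≤ d i a := haA.2
      have hneg : ∀ u ∈ Set.Ioc a s, d i u < 0 := by
        intro u hu
        by_contra hcon
        push_neg at hcon
        have huA : u ∈ A := ⟨⟨le_trans halo hu.1.le, hu.2⟩, hcon⟩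
        have := le_csSup hAcomp.bddAbove huA
        exact absurd (lt_of_le_of_lt this hu.1) (lt_irrefl _)
      have hint := hkey i a s has halo hs.2 hda hneg
      -- lower bound on the integral
      have hcont2 : Continuous fun u : ℝ => d (i+1) u.toNNReal :=
        (hc (i+1)).comp continuous_real_toNNReal
      have hlow : ∀ u : ℝ, u ∈ Set.Icc (a:ℝ) (s:ℝ) → m * 4^(i+1) ≤ d (i+1) u.toNNReal := by
        intro u hu
        have h0u : (0:ℝ) ≤ u := le_trans a.2 hu.1
        have h1 : lo ≤ u.toNNReal := by
          rw [Real.le_toNNReal_iff_coe_le h0u]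
          exact le_trans (NNReal.coe_le_coe.2 halo) hu.1
        have h2 : u.toNNReal ≤ hi := by
          rw [Real.toNNReal_le_iff_le_coe]
          exact le_trans hu.2 (NNReal.coe_le_coe.2 hs.2)
        exact hdm (i+1) u.toNNReal h1 h2
      have hab : (a:ℝ) ≤ (s:ℝ) := NNReal.coe_le_coe.2 has
      have hintlow : ((s:ℝ) - a) * (m * 4^(i+1)) ≤ ∫ u in (a:ℝ)..(s:ℝ), d (i+1) u.toNNReal := by
        have h1 : (∫ _ in (a:ℝ)..(s:ℝ), m * 4^(i+1)) ≤ ∫ u in (a:ℝ)..(s:ℝ), d (i+1) u.toNNReal := by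
          refine integral_mono_on hab (intervalIntegrable_const) (hcont2.intervalIntegrable _ _)
            hlow
        rw [intervalIntegral.integral_const, smul_eq_mul] at h1
        exact h1
      have hlen2 : (s:ℝ) - a ≤ 1/8 := by
        have h1 : (s:ℝ) ≤ hi := NNReal.coe_le_coe.2 hs.2
        have h2 : (lo:ℝ) ≤ a := NNReal.coe_le_coe.2 halo
        linarith
      have hm4 : m * 4^(i+1) ≤ 0 := mul_nonpos_of_nonpos_of_nonneg hm0 (by positivity)
      have hlow2 : (1/8:ℝ) * (m * 4^(i+1)) ≤ ((s:ℝ) - a) * (m * 4^(i+1)) := by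
        apply mul_le_mul_of_nonpos_right hlen2 hm4
      have hds : (1/8:ℝ) * (m * 4^(i+1)) ≤ d i s := by linarith
      have h5 : (1/4:ℝ)^i * ((1/8) * (m * 4^(i+1))) ≤ (1/4:ℝ)^i * d i s :=
        mul_le_mul_of_nonneg_left hds (hwpos i).le
      have h6 : (1/4:ℝ)^i * ((1/8) * (m * 4^(i+1))) = m/2 := by
        have h7 : ((1/4:ℝ))^i * 4^(i+1) = 4 := by
          rw [pow_succ, ← mul_assoc, hw4 i, one_mul]
        calc (1/4:ℝ)^i * ((1/8) * (m * 4^(i+1))) = (1/8) * m * ((1/4:ℝ)^i * 4^(i+1)) := by ring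
          _ = (1/8) * m * 4 := by rw [h7]
          _ = m/2 := by ring
      rw [h6] at h5
      exact le_min h5 (by linarith)
  have hmnn : 0 ≤ m := by
    have := le_csInf hSne hclaim
    linarith
  intro i t ht
  have hmem : min ((1/4:ℝ)^i * d i t) 0 ∈ S := ⟨(i, ⟨t, ht.1, ht.2⟩), rfl⟩
  have h1 : 0 ≤ min ((1/4:ℝ)^i * d i t) 0 := le_trans hmnn (hmle _ hmem)
  have h2 := min_le_left ((1/4:ℝ)^i * d i t) 0
  have h3 : 0 ≤ (1/4:ℝ)^i * d i t := le_trans h1 h2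
  nlinarith [hwpos i, h3]

/-- Global comparison: the infinite Gronwall argument. -/
lemma nonneg_of_system (d : ℕ → ℝ≥0 → ℝ) (hc : ∀ i, Continuous (d i))
    (hbd : ∀ T : ℝ≥0, ∃ C, 0 ≤ C ∧ ∀ i, ∀ t, t ≤ T → -(C * 4^i) ≤ d i t)
    (h0 : ∀ i, 0 ≤ d i 0)
    (hkey : ∀ i, ∀ a b : ℝ≥0, a ≤ b → 0 ≤ d i a →
      (∀ u ∈ Set.Ioc a b, d i u < 0) →
      (∫ u in (a:ℝ)..(b:ℝ), d (i+1) u.toNNReal) ≤ d i b) :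
    ∀ i t, 0 ≤ d i t := by
  have seg : ∀ k : ℕ, ∀ i, ∀ t : ℝ≥0, t ≤ (k:ℝ≥0)/8 → 0 ≤ d i t := by
    intro k
    induction k with
    | zero =>
        intro i t ht
        have : t = 0 := le_antisymm (by simpa using ht) (zero_le (a := t))
        rw [this]; exact h0 i
    | succ k ih =>
        intro i t ht
        rcases le_total t ((k:ℝ≥0)/8) with h | h
        · exact ih i t h
        · obtain ⟨C, hC, hbdC⟩ := hbd (((k+1:ℕ):ℝ≥0)/8)
          refine seg_nonneg d hc ((k:ℝ≥0)/8) (((k+1:ℕ):ℝ≥0)/8) ?_ ?_ C hC hbdC ih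
            (fun j a b hab _ _ => hkey j a b hab) i t ⟨h, ht⟩
          · apply div_le_div_of_nonneg_right ?_ ?_
            · exact_mod_cast Nat.le_succ k
            · norm_num
          · push_cast
            linarith
  intro i t
  obtain ⟨k, hk⟩ := exists_nat_ge (8 * t)
  refine seg k i t ?_
  rw [le_div_iff₀ (by norm_num : (0:ℝ≥0) < 8)]
  rw [mul_comm]
  exact hk


section Sol
variable (hr : MemLdown r) (hlam : 0 < lam)
  (hgc : ∀ i, Continuous fun t => g t i) (hvc : ∀ i, Continuous fun t => v t i)
  (hfix : ∀ i t, g t i = SkorohodMap 1 (Fm r lam g v i) t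
      ∧ v t i = SkorohodMapHat 1 (Fm r lam g v i) t)

include hgc hvc hfix

lemma sol_v_nonneg : ∀ i t, 0 ≤ v t i := by
  intro i t
  rw [(hfix i t).2]
  exact hat_nonneg (Fm_continuous hgc hvc i) t

lemma sol_v_mono : ∀ i, ∀ a b : ℝ≥0, a ≤ b → v a i ≤ v b i := by
  intro i a b hab
  rw [(hfix i a).2, (hfix i b).2]
  exact hat_mono (Fm_continuous hgc hvc i) hab

lemma sol_g_le_one : ∀ i t, g t i ≤ 1 := by
  intro i t
  rw [(hfix i t).1]
  exact map_le_one (Fm_continuous hgc hvc i) t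

include hr in
lemma sol_zero : ∀ i, v 0 i = 0 ∧ g 0 i = r i := by
  have hF0 : ∀ i : ℕ, Fm r lam g v i 0 = r i + (if i = 0 then 0 else v 0 (i-1)) := by
    intro i
    simp only [Fm]
    rw [NNReal.coe_zero, intervalIntegral.integral_same]
    rcases eq_or_ne i 0 with h | h <;> simp [h]
  have hF0' : ∀ i : ℕ, (i = 0 ∨ v 0 (i-1) = 0) → Fm r lam g v i 0 = r i := by
    intro i h
    rw [hF0 i]
    rcases eq_or_ne i 0 with h0 | h0
    · rw [if_pos h0]; ring
    · rw [if_neg h0]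
      rcases h with h | h
      · exact absurd h h0
      · rw [h]; ring
  have key : ∀ i, v 0 i = 0 := by
    intro i
    induction i with
    | zero =>
        rw [(hfix 0 0).2, hat_zero, hF0' 0 (Or.inl rfl)]
        exact max_eq_right (by linarith [(hr.1 0).2])
    | succ n ih =>
        rw [(hfix (n+1) 0).2, hat_zero, hF0' (n+1) (Or.inr (by simpa using ih))]
        exact max_eq_right (by linarith [(hr.1 (n+1)).2])
  intro i
  refine ⟨key i, ?_⟩
  have hz : i = 0 ∨ v 0 (i-1) = 0 := by
    rcases eq_or_ne i 0 with h | h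
    · exact Or.inl h
    · exact Or.inr (key (i-1))
  rw [(hfix i 0).1, map_zero, hF0' i hz,
    max_eq_right (by linarith [(hr.1 i).2] : r i - 1 ≤ 0)]
  ring

/-- Increment identity for `g`. -/
lemma sol_g_delta (i : ℕ) (a b : ℝ≥0) :
    g b i - g a i
      = -(∫ s in (a:ℝ)..(b:ℝ), (g s.toNNReal i - g s.toNNReal (i+1)))
        + ((if i = 0 then lam * (b:ℝ) else v b (i-1))
            - (if i = 0 then lam * (a:ℝ) else v a (i-1)))
        - (v b i - v a i) := by
  have h1 : g b i - g a i = (Fm r lam g v i b - Fm r lam g v i a) - (v b i - v a i) := by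
    rw [(hfix i b).1, (hfix i a).1, map_hat, map_hat, (hfix i b).2.symm, (hfix i a).2.symm]
    ring
  rw [h1, Fm_sub hgc i a b]

lemma sol_w_mono (hlam : 0 < lam) (i : ℕ) (a b : ℝ≥0) (hab : a ≤ b) :
    (if i = 0 then lam * (a:ℝ) else v a (i-1))
      ≤ (if i = 0 then lam * (b:ℝ) else v b (i-1)) := by
  rcases eq_or_ne i 0 with h | h
  · rw [if_pos h, if_pos h]
    have : (a:ℝ) ≤ b := NNReal.coe_le_coe.2 hab
    nlinarith
  · rw [if_neg h, if_neg h]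
    exact sol_v_mono hgc hvc hfix (i-1) a b hab

omit hgc hvc hfix in
lemma mem_Ioc_toNNReal {a b : ℝ≥0} {u : ℝ} (hu : u ∈ Set.Ioc (a:ℝ) (b:ℝ)) :
    u.toNNReal ∈ Set.Ioc a b :=
  ⟨Real.lt_toNNReal_iff_coe_lt.2 hu.1, Real.toNNReal_le_iff_le_coe.2 hu.2⟩

include hr

lemma sol_g_nonneg (hlam : 0 < lam)
    (C : ℝ) (hCb : ∀ i t, |g t i| ≤ C * 4^i * Real.exp (40*t)) :
    ∀ i t, 0 ≤ g t i := by
  have hC0 : 0 ≤ C := by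
    have h1 := hCb 0 0
    have h2 := abs_nonneg (g 0 0)
    simp only [pow_zero, mul_one, NNReal.coe_zero, mul_zero, Real.exp_zero] at h1
    linarith
  refine nonneg_of_system (fun i t => g t i) (fun i => hgc i) ?_ ?_ ?_
  · intro T
    refine ⟨C * Real.exp (40*T), by positivity, ?_⟩
    intro i t hT
    have h1 := hCb i t
    have h2 : Real.exp (40*(t:ℝ)) ≤ Real.exp (40*(T:ℝ)) :=
      Real.exp_le_exp.2 (by
        have : (t:ℝ) ≤ T := NNReal.coe_le_coe.2 hT
        linarith)
    have h3 := (abs_le.1 h1).1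
    have h4 : C * 4^i * Real.exp (40*(t:ℝ)) ≤ C * Real.exp (40*(T:ℝ)) * 4^i := by
      have h5 : (0:ℝ) ≤ C * 4^i := by positivity
      nlinarith [pow_pos (by norm_num : (0:ℝ) < 4) i]
    linarith
  · intro i
    show (0:ℝ) ≤ g 0 i
    rw [(sol_zero hr hgc hvc hfix i).2]
    exact (hr.1 i).1
  · intro i a b hab ha hneg
    have hd := sol_g_delta hgc hvc hfix i a b
    have hflat : v b i = v a i := by
      rw [(hfix i b).2, (hfix i a).2]
      refine hat_flat (Fm_continuous hgc hvc i) hab ?_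
      intro u hu
      have := hneg u hu
      rw [(hfix i u).1] at this
      linarith
    have hw := sol_w_mono hgc hvc hfix hlam i a b hab
    have hIsub : (∫ s in (a:ℝ)..(b:ℝ), (g s.toNNReal i - g s.toNNReal (i+1)))
        = (∫ s in (a:ℝ)..(b:ℝ), g s.toNNReal i)
          - (∫ s in (a:ℝ)..(b:ℝ), g s.toNNReal (i+1)) :=
      integral_sub (((hgc i).comp continuous_real_toNNReal).intervalIntegrable _ _)
        (((hgc (i+1)).comp continuous_real_toNNReal).intervalIntegrable _ _)
    have hab' : (a:ℝ) ≤ (b:ℝ) := NNReal.coe_le_coe.2 hab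
    have hInonpos : (∫ s in (a:ℝ)..(b:ℝ), g s.toNNReal i) ≤ 0 := by
      rw [intervalIntegral.integral_of_le hab']
      exact MeasureTheory.setIntegral_nonpos measurableSet_Ioc
        (fun u hu => (hneg _ (mem_Ioc_toNNReal hu)).le)
    rw [hIsub, hflat] at hd
    linarith

lemma sol_order (hlam : 0 < lam)
    (C : ℝ) (hCb : ∀ i t, |g t i| ≤ C * 4^i * Real.exp (40*t)) :
    ∀ i t, g t (i+1) ≤ g t i := by
  have hC0 : 0 ≤ C := by
    have h1 := hCb 0 0
    have h2 := abs_nonneg (g 0 0)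
    simp only [pow_zero, mul_one, NNReal.coe_zero, mul_zero, Real.exp_zero] at h1
    linarith
  have key := nonneg_of_system (fun i t => g t i - g t (i+1))
    (fun i => (hgc i).sub (hgc (i+1))) ?_ ?_ ?_
  · intro i t
    have hk := key i t
    linarith
  · intro T
    refine ⟨5 * (C * Real.exp (40*T)), by positivity, ?_⟩
    intro i t hT
    show -(5 * (C * Real.exp (40*T)) * 4^i) ≤ g t i - g t (i+1)
    have h1 := hCb i t
    have h1' := hCb (i+1) t
    have h2 : Real.exp (40*(t:ℝ)) ≤ Real.exp (40*(T:ℝ)) :=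
      Real.exp_le_exp.2 (by
        have : (t:ℝ) ≤ T := NNReal.coe_le_coe.2 hT
        linarith)
    have h3 := (abs_le.1 h1).1
    have h3' := (abs_le.1 h1').2
    have h5 : (0:ℝ) ≤ C * 4^i := by positivity
    have hp4 : (4:ℝ)^(i+1) = 4 * 4^i := by ring
    rw [hp4] at h1'
    have h4 : C * 4^i * Real.exp (40*(t:ℝ)) ≤ C * Real.exp (40*(T:ℝ)) * 4^i := by
      nlinarith [pow_pos (by norm_num : (0:ℝ) < 4) i]
    have h4' : C * (4*4^i) * Real.exp (40*(t:ℝ)) ≤ 4 * (C * Real.exp (40*(T:ℝ))) * 4^i := by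
      nlinarith [pow_pos (by norm_num : (0:ℝ) < 4) i]
    have h6 := (abs_le.1 h1).1
    have h7 := (abs_le.1 h1').2
    nlinarith [pow_pos (by norm_num : (0:ℝ) < 4) i, Real.exp_pos (40*(t:ℝ)),
      (abs_le.1 h1).2, (abs_le.1 h1').1]
  · intro i
    have hz := sol_zero hr hgc hvc hfix
    show (0:ℝ) ≤ g 0 i - g 0 (i+1)
    rw [(hz i).2, (hz (i+1)).2]
    linarith [hr.2.1 i]
  · intro i a b hab ha hneg
    have hdi := sol_g_delta hgc hvc hfix i a b
    have hdi1 := sol_g_delta hgc hvc hfix (i+1) a b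
    have hflat : v b i = v a i := by
      rw [(hfix i b).2, (hfix i a).2]
      refine hat_flat (Fm_continuous hgc hvc i) hab ?_
      intro u hu
      have h1 := hneg u hu
      have h2 := sol_g_le_one hgc hvc hfix (i+1) u
      rw [← (hfix i u).1]
      linarith
    have hw := sol_w_mono hgc hvc hfix hlam i a b hab
    have hvmono := sol_v_mono hgc hvc hfix (i+1) a b hab
    have hsi1 : (i+1) - 1 = i := by omega
    rw [if_neg (Nat.succ_ne_zero i), if_neg (Nat.succ_ne_zero i), hsi1, hflat] at hdi1
    have hab' : (a:ℝ) ≤ (b:ℝ) := NNReal.coe_le_coe.2 hab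
    have hInonpos : (∫ s in (a:ℝ)..(b:ℝ), (g s.toNNReal i - g s.toNNReal (i+1))) ≤ 0 := by
      rw [intervalIntegral.integral_of_le hab']
      exact MeasureTheory.setIntegral_nonpos measurableSet_Ioc
        (fun u hu => (hneg _ (mem_Ioc_toNNReal hu)).le)
    rw [hflat] at hdi
    linarith

end Sol

/-- The explicit envelope for the regulator terms. -/
noncomputable def vbar (r : ℕ → ℝ) (lam : ℝ) (i : ℕ) (t : ℝ≥0) : ℝ :=
  max (lam * t - ∑ j ∈ Finset.range (i+1), (1 - r j)) 0

section Env
variable (hr : MemLdown r) (hlam : 0 < lam)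
  (hgc : ∀ i, Continuous fun t => g t i) (hvc : ∀ i, Continuous fun t => v t i)
  (hfix : ∀ i t, g t i = SkorohodMap 1 (Fm r lam g v i) t
      ∧ v t i = SkorohodMapHat 1 (Fm r lam g v i) t)
  (horder : ∀ i t, g t (i+1) ≤ g t i)
  (hnn : ∀ i t, 0 ≤ g t i) (hone : ∀ i t, g t i ≤ 1)

omit hgc hvc hfix horder hnn hone in
include hlam in
lemma vbar_mono_t (i : ℕ) (hab : a ≤ b) : vbar r lam i a ≤ vbar r lam i b := by
  have : (a:ℝ) ≤ b := NNReal.coe_le_coe.2 hab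
  exact max_le_max (by nlinarith) le_rfl

omit hgc hvc hfix horder hnn hone in
include hr hlam in
lemma vbar_le_lam (i : ℕ) (t : ℝ≥0) : 0 ≤ vbar r lam i t ∧ vbar r lam i t ≤ lam * t := by
  have hsum : (0:ℝ) ≤ ∑ j ∈ Finset.range (i+1), (1 - r j) :=
    Finset.sum_nonneg (fun j _ => by linarith [(hr.1 j).2])
  have ht : (0:ℝ) ≤ lam * t := by positivity
  exact ⟨le_max_right _ _, max_le (by linarith) ht⟩

omit hgc hvc hfix hnn hone in
include horder in
lemma int_phi_nonneg (i : ℕ) (u : ℝ≥0) :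
    0 ≤ ∫ s in (0:ℝ)..(u:ℝ), (g s.toNNReal i - g s.toNNReal (i+1)) := by
  refine intervalIntegral.integral_nonneg u.2 (fun x _ => ?_)
  linarith [horder i x.toNNReal]

omit hnn hone in
include hr hlam hgc hvc hfix horder in
lemma v_le_vbar : ∀ i t, v t i ≤ vbar r lam i t := by
  intro i
  induction i with
  | zero =>
      intro t
      rw [(hfix 0 t).2]
      refine hat_le (fun s hs => ?_)
      have h1 : Fm r lam g v 0 s ≤ r 0 + lam * s := by
        simp only [Fm]
        norm_num
        linarith [int_phi_nonneg horder 0 s]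
      have h2 : lam * (s:ℝ) ≤ lam * t := by
        have := NNReal.coe_le_coe.2 hs.2
        nlinarith
      refine max_le ?_ (vbar_le_lam hr hlam 0 t).1
      have h3 : lam * (t:ℝ) - ∑ j ∈ Finset.range 1, (1 - r j)
          ≤ vbar r lam 0 t := le_max_left _ _
      rw [Finset.sum_range_one] at h3
      linarith
  | succ n ih =>
      intro t
      rw [(hfix (n+1) t).2]
      refine hat_le (fun s hs => ?_)
      have h1 : Fm r lam g v (n+1) s ≤ r (n+1) + v s n := by
        simp only [Fm, if_neg (Nat.succ_ne_zero n), Nat.succ_sub_one]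
        linarith [int_phi_nonneg horder (n+1) s]
      have h2 : v s n ≤ vbar r lam n t :=
        le_trans (ih s) (vbar_mono_t hlam n hs.2)
      refine max_le ?_ (vbar_le_lam hr hlam (n+1) t).1
      have hss : ∑ j ∈ Finset.range (n+2), (1 - r j)
          = ∑ j ∈ Finset.range (n+1), (1 - r j) + (1 - r (n+1)) := Finset.sum_range_succ _ _
      rcases max_cases (lam * (t:ℝ) - ∑ j ∈ Finset.range (n+1), (1 - r j)) (0:ℝ) with
        ⟨hm, hm2⟩ | ⟨hm, hm2⟩
      · have h4 : lam * (t:ℝ) - ∑ j ∈ Finset.range (n+2), (1 - r j) ≤ vbar r lam (n+1) t :=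
          le_max_left _ _
        rw [hss] at h4
        have : vbar r lam n t = lam * (t:ℝ) - ∑ j ∈ Finset.range (n+1), (1 - r j) := hm
        linarith
      · have : vbar r lam n t = 0 := hm
        have h5 : (0:ℝ) ≤ vbar r lam (n+1) t := le_max_right _ _
        linarith [(hr.1 (n+1)).2]

omit hnn hone in
include hr hlam hgc hvc hfix horder in
lemma v_le_lam : ∀ i t, v t i ≤ lam * t := fun i t =>
  le_trans (v_le_vbar hr hlam hgc hvc hfix horder i t) (vbar_le_lam hr hlam i t).2

omit hnn hone in
include hr hlam hgc hvc hfix horder in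
lemma g_le_env : ∀ i t, g t (i+1) ≤ r (i+1) + vbar r lam i t := by
  intro i t
  rw [(hfix (i+1) t).1]
  refine le_trans (map_le (Fm_continuous hgc hvc (i+1)) t) ?_
  have h1 : Fm r lam g v (i+1) t ≤ r (i+1) + v t i := by
    simp only [Fm, if_neg (Nat.succ_ne_zero i), Nat.succ_sub_one]
    linarith [int_phi_nonneg horder (i+1) t]
  linarith [v_le_vbar hr hlam hgc hvc hfix horder i t]

omit hgc hvc hfix horder hnn hone in
include hr hlam in
lemma vbar_vanish (T : ℝ≥0) : ∃ N : ℕ, ∀ i, N ≤ i → ∀ t, t ≤ T → vbar r lam i t = 0 := by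
  set R := ∑' j, r j with hR
  obtain ⟨N, hN⟩ := exists_nat_ge (lam * T + R)
  refine ⟨N, fun i hi t ht => ?_⟩
  have hsum : ∑ j ∈ Finset.range (i+1), (1 - r j) = (i+1 : ℝ) - ∑ j ∈ Finset.range (i+1), r j := by
    rw [Finset.sum_sub_distrib]
    simp
  have hpart : ∑ j ∈ Finset.range (i+1), r j ≤ R :=
    Summable.sum_le_tsum _ (fun j _ => (hr.1 j).1) hr.2.2
  have hi' : (N:ℝ) ≤ i := Nat.cast_le.2 hi
  have ht' : lam * (t:ℝ) ≤ lam * T := by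
    have := NNReal.coe_le_coe.2 ht
    nlinarith
  refine max_eq_right ?_
  rw [hsum]
  linarith

end Env

section Props
variable (hr : MemLdown r) (hlam : 0 < lam)
  (hgc : ∀ i, Continuous fun t => g t i) (hvc : ∀ i, Continuous fun t => v t i)
  (hfix : ∀ i t, g t i = SkorohodMap 1 (Fm r lam g v i) t
      ∧ v t i = SkorohodMapHat 1 (Fm r lam g v i) t)
  (horder : ∀ i t, g t (i+1) ≤ g t i)
  (hnn : ∀ i t, 0 ≤ g t i) (hone : ∀ i t, g t i ≤ 1)

include hr hlam hgc hvc hfix horder hnn hone in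
lemma sol_summable (t : ℝ≥0) : Summable (fun i => g t i) := by
  obtain ⟨N, hN⟩ := vbar_vanish hr hlam t
  have henv := g_le_env hr hlam hgc hvc hfix horder
  set b : ℕ → ℝ := fun i => r i + (if i ≤ N then 1 else 0) with hb
  have hble : ∀ i, g t i ≤ b i := by
    intro i
    by_cases h : i ≤ N
    · simp only [hb, if_pos h]
      linarith [hone i t, (hr.1 i).1]
    · push_neg at h
      obtain ⟨k, rfl⟩ : ∃ k, i = k + 1 := ⟨i - 1, by omega⟩
      have hk : N ≤ k := by omega
      have h1 := henv k t
      have h2 := hN k hk t le_rfl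
      simp only [hb, if_neg (by omega : ¬ k + 1 ≤ N)]
      rw [h2] at h1
      linarith
  have hbsum : Summable b := by
    refine hr.2.2.add (summable_of_ne_finset_zero (s := Finset.range (N+1)) ?_)
    intro i hi
    simp only [Finset.mem_range] at hi
    rw [if_neg (by omega)]
  exact Summable.of_nonneg_of_le (fun i => hnn i t) hble hbsum

include hr hlam hgc hvc hfix horder hnn hone in
lemma sol_memLdown (t : ℝ≥0) : MemLdown (g t) :=
  ⟨fun i => ⟨hnn i t, hone i t⟩, fun i => horder i t, sol_summable hr hlam hgc hvc hfix horder hnn hone t⟩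

include hr hlam hgc hvc hfix horder in
lemma sol_v_bdd (t : ℝ≥0) : BddAbove (Set.range fun i => |v t i|) := by
  refine ⟨lam * t, ?_⟩
  rintro x ⟨i, rfl⟩
  show |v t i| ≤ lam * t
  rw [abs_of_nonneg (sol_v_nonneg hgc hvc hfix i t)]
  exact le_trans (v_le_vbar hr hlam hgc hvc hfix horder i t) (vbar_le_lam hr hlam i t).2

set_option maxHeartbeats 1000000 in
include hr hlam hgc hvc hfix horder hnn hone in
lemma sol_l1_cont (t₀ : ℝ≥0) :
    Tendsto (fun t => ∑' i, |g t i - g t₀ i|) (𝓝 t₀) (𝓝 0) := by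
  have hsumm : ∀ t, Summable (fun i => |g t i - g t₀ i|) := by
    intro t
    have h1 := sol_summable hr hlam hgc hvc hfix horder hnn hone t
    have h2 := sol_summable hr hlam hgc hvc hfix horder hnn hone t₀
    exact (h1.sub h2).abs
  have henv := g_le_env hr hlam hgc hvc hfix horder
  set T : ℝ≥0 := t₀ + 1 with hT
  obtain ⟨N, hN⟩ := vbar_vanish hr hlam T
  rw [Metric.tendsto_nhds]
  intro ε hε
  -- choose the split point
  have htails : Tendsto (fun M => ∑' k, r (k + M)) atTop (𝓝 0) := by
    exact_mod_cast tendsto_sum_nat_add r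
  have hev : ∀ᶠ M in atTop, (∑' k, r (k + M)) < ε/8 ∧ N + 1 ≤ M := by
    refine (htails.eventually (eventually_lt_nhds (by linarith))).and (eventually_ge_atTop (N+1))
  obtain ⟨M, hM1, hM2⟩ := hev.exists
  -- tail estimate valid for t ≤ T
  have htail : ∀ t, t ≤ T → (∑' k, |g t (k + M) - g t₀ (k + M)|) ≤ 2 * ∑' k, r (k + M) := by
    intro t ht
    have hgr : ∀ (s : ℝ≥0), s ≤ T → ∀ k, g s (k + M) ≤ r (k + M) := by
      intro s hs k
      obtain ⟨j, hj⟩ : ∃ j, k + M = j + 1 := ⟨k + M - 1, by omega⟩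
      rw [hj]
      have h1 := henv j s
      have h2 := hN j (by omega) s hs
      rw [h2] at h1
      linarith
    have hpt : ∀ k, |g t (k + M) - g t₀ (k + M)| ≤ 2 * r (k + M) := by
      intro k
      have h1 := hgr t ht k
      have h2 := hgr t₀ (by rw [hT]; exact le_trans le_self_add le_rfl) k
      have h3 := hnn (k + M) t
      have h4 := hnn (k + M) t₀
      rw [abs_le]; constructor <;> linarith
    have hs1 : Summable (fun k => |g t (k + M) - g t₀ (k + M)|) :=
      (summable_nat_add_iff M).2 (hsumm t)
    have hs2 : Summable (fun k => 2 * r (k + M)) :=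
      ((summable_nat_add_iff M).2 hr.2.2).mul_left 2
    calc (∑' k, |g t (k + M) - g t₀ (k + M)|) ≤ ∑' k, 2 * r (k + M) :=
        Summable.tsum_le_tsum hpt hs1 hs2
      _ = 2 * ∑' k, r (k + M) := tsum_mul_left
  -- head tends to zero
  have hhead : Tendsto (fun t => ∑ i ∈ Finset.range M, |g t i - g t₀ i|) (𝓝 t₀) (𝓝 0) := by
    have : ∀ i ∈ Finset.range M, Tendsto (fun t => |g t i - g t₀ i|) (𝓝 t₀) (𝓝 0) := by
      intro i _
      have h1 : Tendsto (fun t => g t i - g t₀ i) (𝓝 t₀) (𝓝 (g t₀ i - g t₀ i)) :=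
        ((hgc i).tendsto t₀).sub tendsto_const_nhds
      rw [sub_self] at h1
      simpa using h1.abs
    have := tendsto_finset_sum (Finset.range M) this
    simpa using this
  have hevhead : ∀ᶠ t in 𝓝 t₀, (∑ i ∈ Finset.range M, |g t i - g t₀ i|) < ε/2 := by
    refine hhead.eventually (eventually_lt_nhds (by linarith))
  have hevT : ∀ᶠ t in 𝓝 t₀, t ≤ T := by
    refine eventually_of_mem (Iic_mem_nhds ?_) (fun x hx => hx)
    rw [hT]
    exact lt_add_of_pos_right t₀ one_pos
  filter_upwards [hevhead, hevT] with t hhd hle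
  rw [Real.dist_eq, sub_zero, abs_of_nonneg (tsum_nonneg (fun i => abs_nonneg _))]
  have hsplit := (Summable.sum_add_tsum_nat_add M (hsumm t)).symm
  rw [hsplit]
  have := htail t hle
  linarith

include hr hlam hgc hvc hfix horder in
lemma sol_sup_cont (t₀ : ℝ≥0) :
    Tendsto (fun t => ⨆ i, |v t i - v t₀ i|) (𝓝 t₀) (𝓝 0) := by
  set T : ℝ≥0 := t₀ + 1 with hT
  obtain ⟨N, hN⟩ := vbar_vanish hr hlam T
  have hvz : ∀ t, t ≤ T → ∀ i, N ≤ i → v t i = 0 := by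
    intro t ht i hi
    have h1 := sol_v_nonneg hgc hvc hfix i t
    have h2 := le_trans (v_le_vbar hr hlam hgc hvc hfix horder i t)
      (le_of_eq (hN i hi t ht))
    linarith
  have ht₀T : t₀ ≤ T := by rw [hT]; exact le_trans le_self_add le_rfl
  have hevT : ∀ᶠ t in 𝓝 t₀, t ≤ T := by
    refine eventually_of_mem (Iic_mem_nhds ?_) (fun x hx => hx)
    rw [hT]
    exact lt_add_of_pos_right t₀ one_pos
  have hH : Tendsto (fun t => ∑ i ∈ Finset.range N, |v t i - v t₀ i|) (𝓝 t₀) (𝓝 0) := by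
    have : ∀ i ∈ Finset.range N, Tendsto (fun t => |v t i - v t₀ i|) (𝓝 t₀) (𝓝 0) := by
      intro i _
      have h1 : Tendsto (fun t => v t i - v t₀ i) (𝓝 t₀) (𝓝 (v t₀ i - v t₀ i)) :=
        ((hvc i).tendsto t₀).sub tendsto_const_nhds
      rw [sub_self] at h1
      simpa using h1.abs
    have := tendsto_finset_sum (Finset.range N) this
    simpa using this
  refine squeeze_zero' ?_ ?_ hH
  · refine Eventually.of_forall (fun t => ?_)
    exact Real.iSup_nonneg (fun i => abs_nonneg _)
  · filter_upwards [hevT] with t ht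
    refine Real.iSup_le (fun i => ?_) ?_
    · by_cases hi : i < N
      · refine Finset.single_le_sum (f := fun i => |v t i - v t₀ i|)
          (fun j _ => abs_nonneg _) (Finset.mem_range.2 hi)
      · push_neg at hi
        rw [hvz t ht i hi, hvz t₀ ht₀T i hi]
        simp only [sub_zero, abs_zero]
        exact Finset.sum_nonneg (fun j _ => abs_nonneg _)
    · exact Finset.sum_nonneg (fun j _ => abs_nonneg _)

end Props

/-- Coordinates of an `ℓ¹`-continuous candidate are continuous. -/
lemma cand_cont_g (hml : ∀ t, MemLdown (g t))
    (hl1 : ∀ t₀ : ℝ≥0, Tendsto (fun t => ∑' i, |g t i - g t₀ i|) (𝓝 t₀) (𝓝 0)) :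
    ∀ i, Continuous fun t => g t i := by
  intro i
  rw [continuous_iff_continuousAt]
  intro t₀
  rw [ContinuousAt, tendsto_iff_dist_tendsto_zero]
  refine squeeze_zero (fun t => dist_nonneg) (fun t => ?_) (hl1 t₀)
  rw [Real.dist_eq]
  have hsumm : Summable (fun j => |g t j - g t₀ j|) := ((hml t).2.2.sub (hml t₀).2.2).abs
  exact Summable.le_tsum hsumm i (fun j _ => abs_nonneg _)

/-- Coordinates of a sup-norm-continuous candidate are continuous. -/
lemma cand_cont_v (hbdd : ∀ t, BddAbove (Set.range fun i => |v t i|))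
    (hsup : ∀ t₀ : ℝ≥0, Tendsto (fun t => ⨆ i, |v t i - v t₀ i|) (𝓝 t₀) (𝓝 0)) :
    ∀ i, Continuous fun t => v t i := by
  intro i
  rw [continuous_iff_continuousAt]
  intro t₀
  rw [ContinuousAt, tendsto_iff_dist_tendsto_zero]
  refine squeeze_zero (fun t => dist_nonneg) (fun t => ?_) (hsup t₀)
  rw [Real.dist_eq]
  obtain ⟨Mt, hMt⟩ := hbdd t
  obtain ⟨Mt₀, hMt₀⟩ := hbdd t₀
  have hb : BddAbove (Set.range fun j => |v t j - v t₀ j|) := by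
    refine ⟨Mt + Mt₀, ?_⟩
    rintro x ⟨j, rfl⟩
    have h1 : |v t j| ≤ Mt := hMt ⟨j, rfl⟩
    have h2 : |v t₀ j| ≤ Mt₀ := hMt₀ ⟨j, rfl⟩
    calc |v t j - v t₀ j| ≤ |v t j| + |v t₀ j| := abs_sub _ _
      _ ≤ Mt + Mt₀ := add_le_add h1 h2
  exact le_ciSup hb i

/-- Uniqueness of solutions. -/
lemma sol_unique (hr : MemLdown r) (hlam : 0 < lam)
    (hgc : ∀ i, Continuous fun t => g t i) (hvc : ∀ i, Continuous fun t => v t i)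
    (hfix : ∀ i t, g t i = SkorohodMap 1 (Fm r lam g v i) t
      ∧ v t i = SkorohodMapHat 1 (Fm r lam g v i) t)
    (hml : ∀ t, MemLdown (g t))
    (hgc' : ∀ i, Continuous fun t => g' t i) (hvc' : ∀ i, Continuous fun t => v' t i)
    (hfix' : ∀ i t, g' t i = SkorohodMap 1 (Fm r lam g' v' i) t
      ∧ v' t i = SkorohodMapHat 1 (Fm r lam g' v' i) t)
    (hml' : ∀ t, MemLdown (g' t)) :
    g = g' ∧ v = v' := by
  have hord : ∀ i t, g t (i+1) ≤ g t i := fun i t => (hml t).2.1 i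
  have hord' : ∀ i t, g' t (i+1) ≤ g' t i := fun i t => (hml' t).2.1 i
  have hvle := v_le_lam hr hlam hgc hvc hfix hord
  have hvle' := v_le_lam hr hlam hgc' hvc' hfix' hord'
  have hvnn := sol_v_nonneg hgc hvc hfix
  have hvnn' := sol_v_nonneg hgc' hvc' hfix'
  have hindb : ∀ n : ℕ,
      (∀ i t, |g t i - g' t i| ≤ (2+4*lam) * (1/2)^n * 4^i * Real.exp (40*t)) ∧
      (∀ i t, |v t i - v' t i| ≤ (1+2*lam) * (1/2)^n * 4^i * Real.exp (40*t)) := by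
    intro n
    induction n with
    | zero =>
        constructor
        · intro i t
          have h1 := ((hml t).1 i).1
          have h2 := ((hml t).1 i).2
          have h3 := ((hml' t).1 i).1
          have h4 := ((hml' t).1 i).2
          have hw := one_le_weight i t
          rw [abs_le]
          constructor <;> nlinarith
        · intro i t
          have h1 := hvnn i t
          have h2 := hvnn' i t
          have h3 := hvle i t
          have h4 := hvle' i t
          have hw := t_le_weight i t
          have hw1 := one_le_weight i t
          rw [abs_le]
          constructor <;> nlinarith
    | succ n ih =>
        have hst := step_est (r := r) (lam := lam) hgc hvc hgc' hvc'
          ((2+4*lam) * (1/2)^n) ((1+2*lam) * (1/2)^n)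
          (fun i t => by
            have := ih.1 i t
            calc |g t i - g' t i| ≤ (2+4*lam) * (1/2)^n * 4^i * Real.exp (40*t) := this
              _ = ((2+4*lam) * (1/2)^n) * 4^i * Real.exp (40*t) := by ring)
          (fun i t => by
            have := ih.2 i t
            calc |v t i - v' t i| ≤ (1+2*lam) * (1/2)^n * 4^i * Real.exp (40*t) := this
              _ = ((1+2*lam) * (1/2)^n) * 4^i * Real.exp (40*t) := by ring)
        constructor
        · intro i t
          have h := hst.1 i t
          rw [← (hfix i t).1, ← (hfix' i t).1] at h
          have he : ((2+4*lam) * (1/2)^n)/4 + ((1+2*lam) * (1/2)^n)/2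
              = (2+4*lam) * (1/2)^(n+1) := by ring
          rw [he] at h
          exact h
        · intro i t
          have h := hst.2 i t
          rw [← (hfix i t).2, ← (hfix' i t).2] at h
          have he : ((2+4*lam) * (1/2)^n)/8 + ((1+2*lam) * (1/2)^n)/4
              = (1+2*lam) * (1/2)^(n+1) := by ring
          rw [he] at h
          exact h
  have hzero : ∀ (c : ℝ) (i : ℕ) (t : ℝ≥0),
      Tendsto (fun n : ℕ => c * (1/2)^n * 4^i * Real.exp (40*(t:ℝ))) atTop (𝓝 0) := by
    intro c i t
    have h0 := tendsto_pow_atTop_nhds_zero_of_lt_one (by norm_num : (0:ℝ) ≤ 1/2)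
      (by norm_num : (1/2:ℝ) < 1)
    have h1 := ((h0.const_mul c).mul_const ((4:ℝ)^i)).mul_const (Real.exp (40*(t:ℝ)))
    simpa [mul_comm, mul_assoc, mul_left_comm] using h1
  constructor
  · funext t i
    have h1 : |g t i - g' t i| ≤ 0 := by
      refine ge_of_tendsto' (hzero (2+4*lam) i t) (fun n => ?_)
      have := (hindb n).1 i t
      linarith
    have h2 := abs_nonneg (g t i - g' t i)
    have h3 := abs_eq_zero.1 (le_antisymm h1 h2)
    linarith
  · funext t i
    have h1 : |v t i - v' t i| ≤ 0 := by
      refine ge_of_tendsto' (hzero (1+2*lam) i t) (fun n => ?_)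
      have := (hindb n).2 i t
      linarith
    have h2 := abs_nonneg (v t i - v' t i)
    have h3 := abs_eq_zero.1 (le_antisymm h1 h2)
    linarith


end SKaux

/-- Proposition 2.1 (uniqueness of the fluid limit equations): for `r ∈ ℓ↓` and
`λ ∈ (0,∞)` there is exactly one pair `(g, v)`, `g : [0,∞) → ℓ↓` continuous in `ℓ¹`
and `v : [0,∞) → ℓ^∞` continuous in sup norm, solving the constrained ODE system,
where `g t i` is the paper's `g_{i+1}(t)`, `v t i` is the paper's `v_{i+1}(t)` and
`v₀(t) = λ t`. -/
theorem stmt0 (r : ℕ → ℝ) (hr : MemLdown r) (lam : ℝ) (hlam : 0 < lam) :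
    ∃! gv : (ℝ≥0 → ℕ → ℝ) × (ℝ≥0 → ℕ → ℝ),
      (∀ t, MemLdown (gv.1 t)) ∧
      (∀ t₀ : ℝ≥0,
        Tendsto (fun t => ∑' i, |gv.1 t i - gv.1 t₀ i|) (𝓝 t₀) (𝓝 0)) ∧
      (∀ t, BddAbove (Set.range fun i => |gv.2 t i|)) ∧
      (∀ t₀ : ℝ≥0,
        Tendsto (fun t => ⨆ i, |gv.2 t i - gv.2 t₀ i|) (𝓝 t₀) (𝓝 0)) ∧
      (∀ i : ℕ, ∀ t : ℝ≥0,
        gv.1 t i = SkorohodMap 1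
          (fun u => r i - (∫ s in (0:ℝ)..(u:ℝ), (gv.1 s.toNNReal i - gv.1 s.toNNReal (i+1)))
            + (if i = 0 then lam * (u:ℝ) else gv.2 u (i-1))) t ∧
        gv.2 t i = SkorohodMapHat 1
          (fun u => r i - (∫ s in (0:ℝ)..(u:ℝ), (gv.1 s.toNNReal i - gv.1 s.toNNReal (i+1)))
            + (if i = 0 then lam * (u:ℝ) else gv.2 u (i-1))) t) := by
  obtain ⟨g, v, hgc, hvc, hgb, hvb, hfix⟩ := SKaux.exists_fixed hr hlam
  have hCb : ∀ i t, |g t i| ≤ (1 + 8*(1+lam)) * 4^i * Real.exp (40*t) := by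
    intro i t
    have h1 := hgb i t
    have h2 : |r i| ≤ 1 := abs_le.2 ⟨by linarith [(hr.1 i).1], (hr.1 i).2⟩
    have h3 : |g t i| ≤ |g t i - r i| + |r i| := by
      calc |g t i| = |(g t i - r i) + r i| := by ring_nf
        _ ≤ |g t i - r i| + |r i| := abs_add_le _ _
    have hw := SKaux.one_le_weight i t
    have hwpos : (0:ℝ) < 4^i * Real.exp (40*t) := by positivity
    nlinarith
  have hnn := SKaux.sol_g_nonneg hr hgc hvc hfix hlam _ hCb
  have hord := SKaux.sol_order hr hgc hvc hfix hlam _ hCb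
  have hone := SKaux.sol_g_le_one hgc hvc hfix
  have hml := SKaux.sol_memLdown hr hlam hgc hvc hfix hord hnn hone
  refine ⟨(g, v), ⟨fun t => hml t,
      SKaux.sol_l1_cont hr hlam hgc hvc hfix hord hnn hone,
      SKaux.sol_v_bdd hr hlam hgc hvc hfix hord,
      SKaux.sol_sup_cont hr hlam hgc hvc hfix hord,
      fun i t => ⟨(hfix i t).1, (hfix i t).2⟩⟩, ?_⟩
  rintro ⟨g', v'⟩ ⟨hml', hl1', hbdd', hsup', heqs'⟩
  have hgc' := SKaux.cand_cont_g hml' hl1'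
  have hvc' := SKaux.cand_cont_v hbdd' hsup'
  have hfix' : ∀ i t, g' t i = SkorohodMap 1 (SKaux.Fm r lam g' v' i) t
      ∧ v' t i = SkorohodMapHat 1 (SKaux.Fm r lam g' v' i) t := fun i t => heqs' i t
  have hu := SKaux.sol_unique hr hlam hgc' hvc' hfix' hml' hgc hvc hfix hml
  exact Prod.ext hu.1 hu.2
end

section
/- Let (d_n) be a sequence of integers with 1 ≤ d_n ≤ n and d_n/n → 0 as n → ∞. Then for every ε ∈ (0,1), sup_{x ∈ [ε,1]} | (β'_n(x)/β_n(x)) / (γ'_n(x)/γ_n(x)) − 1 | → 0 as n → ∞. -/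
open Filter Topology

/-- `β_n(x) = ∏_{i=0}^{d−1} ((x − i/n)/(1 − i/n))⁺`. -/
noncomputable def betaFn (n d : ℕ) (x : ℝ) : ℝ :=
  ∏ i ∈ Finset.range d, max ((x - (i : ℝ) / (n : ℝ)) / (1 - (i : ℝ) / (n : ℝ))) 0

/-- The derivative `β'_n` of `β_n` away from `(d−1)/n`, set to `0` for
`x ≤ (d−1)/n`. -/
noncomputable def betaDeriv (n d : ℕ) (x : ℝ) : ℝ :=
  if ((d : ℝ) - 1) / (n : ℝ) < x then
    ∑ j ∈ Finset.range d, (1 - (j : ℝ) / (n : ℝ))⁻¹ *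
      ∏ i ∈ (Finset.range d).erase j, (x - (i : ℝ) / (n : ℝ)) / (1 - (i : ℝ) / (n : ℝ))
  else 0

lemma stmt3_aux (a b P : ℝ) (ha : a ≠ 0) : b⁻¹ * P = a⁻¹ * (a / b * P) := by
  field_simp

/-- Lemma 5.1 (first part): if `d_n/n → 0`, then for every `ε ∈ (0,1)`,
`sup_{x ∈ [ε,1]} | (β'_n/β_n) / (γ'_n/γ_n) − 1 | → 0`, with `γ_n(x) = x^{d_n}`,
`γ'_n(x) = d_n x^{d_n−1}`. -/
theorem stmt3 (d : ℕ → ℕ) (hd : ∀ n : ℕ, 1 ≤ n → 1 ≤ d n ∧ d n ≤ n)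
    (hdn : Tendsto (fun n => (d n : ℝ) / (n : ℝ)) atTop (𝓝 0))
    (ε : ℝ) (hε : ε ∈ Set.Ioo (0 : ℝ) 1) :
    ∀ δ > 0, ∀ᶠ n in atTop, ∀ x ∈ Set.Icc ε 1,
      |(betaDeriv n (d n) x / betaFn n (d n) x) /
          (((d n : ℝ) * x ^ (d n - 1)) / x ^ (d n)) - 1| < δ := by
  obtain ⟨hε0, hε1⟩ := hε
  intro δ hδ
  have hmin : (0:ℝ) < min (ε/2) (δ*ε/2) := lt_min (by linarith) (by positivity)
  filter_upwards [hdn.eventually_lt_const hmin, eventually_ge_atTop 1] with n hn hn1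
  intro x hx
  obtain ⟨hD1, hDn⟩ := hd n hn1
  obtain ⟨hxε, hx1⟩ := hx
  have hx0 : (0:ℝ) < x := lt_of_lt_of_le hε0 hxε
  have hn0 : (0:ℝ) < (n:ℝ) := by exact_mod_cast hn1
  have hDε : (d n : ℝ)/(n:ℝ) < ε/2 := lt_of_lt_of_le hn (min_le_left _ _)
  have hDδ : (d n : ℝ)/(n:ℝ) < δ*ε/2 := lt_of_lt_of_le hn (min_le_right _ _)
  have hjD : ∀ j ∈ Finset.range (d n), (j:ℝ)/(n:ℝ) < (d n : ℝ)/(n:ℝ) := by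
    intro j hj
    gcongr
    exact_mod_cast Finset.mem_range.mp hj
  have hsub : ∀ j ∈ Finset.range (d n), ε/2 < x - (j:ℝ)/(n:ℝ) := by
    intro j hj
    have := hjD j hj
    linarith
  have hsub0 : ∀ j ∈ Finset.range (d n), (0:ℝ) < x - (j:ℝ)/(n:ℝ) := by
    intro j hj; linarith [hsub j hj]
  have hden : ∀ j ∈ Finset.range (d n), (0:ℝ) < 1 - (j:ℝ)/(n:ℝ) := by
    intro j hj
    have := hjD j hj
    linarith
  have hbeta : betaFn n (d n) x
      = ∏ i ∈ Finset.range (d n), (x - (i:ℝ)/(n:ℝ)) / (1 - (i:ℝ)/(n:ℝ)) := by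
    refine Finset.prod_congr rfl fun i hi => ?_
    exact max_eq_left (le_of_lt (div_pos (hsub0 i hi) (hden i hi)))
  have hbpos : 0 < betaFn n (d n) x := by
    rw [hbeta]
    exact Finset.prod_pos fun i hi => div_pos (hsub0 i hi) (hden i hi)
  have hcond : ((d n : ℝ) - 1)/(n:ℝ) < x := by
    have h1 : ((d n : ℝ) - 1)/(n:ℝ) < (d n : ℝ)/(n:ℝ) := by gcongr; linarith
    linarith
  have hderiv : betaDeriv n (d n) x
      = (∑ j ∈ Finset.range (d n), (x - (j:ℝ)/(n:ℝ))⁻¹) * betaFn n (d n) x := by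
    rw [betaDeriv, if_pos hcond, hbeta, Finset.sum_mul]
    refine Finset.sum_congr rfl fun j hj => ?_
    rw [← Finset.mul_prod_erase _ _ hj]
    exact stmt3_aux _ _ _ (ne_of_gt (hsub0 j hj))
  have hratio1 : betaDeriv n (d n) x / betaFn n (d n) x
      = ∑ j ∈ Finset.range (d n), (x - (j:ℝ)/(n:ℝ))⁻¹ := by
    rw [hderiv, mul_div_assoc, div_self (ne_of_gt hbpos), mul_one]
  have hD0 : (0:ℝ) < (d n : ℝ) := by exact_mod_cast hD1
  have hgamma : ((d n : ℝ) * x ^ (d n - 1)) / x ^ (d n) = (d n : ℝ) / x := by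
    have hpow : x ^ (d n) = x ^ (d n - 1) * x := by
      conv_lhs => rw [show d n = (d n - 1) + 1 from (Nat.succ_pred_eq_of_pos hD1).symm]
      rw [pow_succ]
    rw [hpow, ← div_div, mul_div_assoc, div_self (pow_ne_zero _ (ne_of_gt hx0)), mul_one]
  have hlow : (d n : ℝ) ≤ ∑ j ∈ Finset.range (d n), (x - (j:ℝ)/(n:ℝ))⁻¹ * x := by
    calc (d n : ℝ) = ∑ j ∈ Finset.range (d n), (1:ℝ) := by simp
    _ ≤ _ := by
        refine Finset.sum_le_sum fun j hj => ?_
        rw [inv_mul_eq_div, le_div_iff₀ (hsub0 j hj), one_mul]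
        have : (0:ℝ) ≤ (j:ℝ)/(n:ℝ) := by positivity
        linarith
  have hhigh : ∑ j ∈ Finset.range (d n), (x - (j:ℝ)/(n:ℝ))⁻¹ * x
      < (d n : ℝ) * (1 + δ) := by
    have hne : (Finset.range (d n)).Nonempty :=
      Finset.nonempty_range_iff.mpr (Nat.one_le_iff_ne_zero.mp hD1)
    calc ∑ j ∈ Finset.range (d n), (x - (j:ℝ)/(n:ℝ))⁻¹ * x
        < ∑ j ∈ Finset.range (d n), (1 + δ) := by
          refine Finset.sum_lt_sum_of_nonempty hne fun j hj => ?_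
          rw [inv_mul_eq_div, div_lt_iff₀ (hsub0 j hj)]
          have h1 : (j:ℝ)/(n:ℝ) < δ*ε/2 := lt_trans (hjD j hj) hDδ
          have h2 := hsub j hj
          nlinarith [mul_lt_mul_of_pos_left h2 hδ]
    _ = (d n : ℝ) * (1 + δ) := by
          rw [Finset.sum_const, Finset.card_range, nsmul_eq_mul]
  rw [hratio1, hgamma, div_div_eq_mul_div, Finset.sum_mul, abs_lt]
  constructor
  · have h := (one_le_div hD0).mpr hlow
    linarith
  · have h := (div_lt_iff₀ hD0).mpr (by rw [mul_comm]; exact hhigh :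
      (∑ j ∈ Finset.range (d n), (x - (j:ℝ)/(n:ℝ))⁻¹ * x) < (1 + δ) * (d n : ℝ))
    linarith
end

section
/- Let (d_n) be a sequence of integers with 1 ≤ d_n ≤ n and d_n/√n → 0 as n → ∞. Then for every ε ∈ (0,1), sup_{x ∈ [ε,1]} | β_n(x)/γ_n(x) − 1 | → 0 and sup_{x ∈ [ε,1]} | β'_n(x)/γ'_n(x) − 1 | → 0 as n → ∞. -/
open Filter Topology

set_option maxHeartbeats 1600000 in
lemma beta_key (n D : ℕ) (hn : 1 ≤ n) (hD1 : 1 ≤ D) (hDn : D ≤ n)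
    (ε δ : ℝ) (hε0 : 0 < ε) (hε1 : ε ≤ 1) (hδ : 0 < δ)
    (hkey : (D : ℝ) ^ 2 / (n : ℝ) < ε * min (δ / 2) 4⁻¹)
    (x : ℝ) (hx : x ∈ Set.Icc ε 1) :
    |betaFn n D x / x ^ D - 1| < δ ∧
    |betaDeriv n D x / ((D : ℝ) * x ^ (D - 1)) - 1| < δ := by
  obtain ⟨hx1, hx2⟩ := hx
  have hm : (0 : ℝ) < n := by exact_mod_cast hn
  have hx0 : 0 < x := lt_of_lt_of_le hε0 hx1
  have hD0 : (1 : ℝ) ≤ (D : ℝ) := by exact_mod_cast hD1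
  obtain ⟨c, hc⟩ : ∃ c : ℝ, c = (D : ℝ) / ((n : ℝ) * ε) := ⟨_, rfl⟩
  have hc0 : 0 < c := by rw [hc]; positivity
  have hDceq : (D : ℝ) * c = (D : ℝ) ^ 2 / ((n : ℝ) * ε) := by rw [hc]; ring
  have hDc : (D : ℝ) * c < min (δ / 2) 4⁻¹ := by
    rw [hDceq, div_lt_iff₀ (by positivity)]
    rw [div_lt_iff₀ hm] at hkey
    nlinarith
  have hcDc : c ≤ (D : ℝ) * c := le_mul_of_one_le_left hc0.le hD0
  have hDc2 : (D : ℝ) * c < δ / 2 := lt_of_lt_of_le hDc (min_le_left _ _)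
  have hDc4 : (D : ℝ) * c < 4⁻¹ := lt_of_lt_of_le hDc (min_le_right _ _)
  have hc4 : c < 4⁻¹ := lt_of_le_of_lt hcDc hDc4
  have hc1 : c < 1 := by linarith
  have h1c : 0 < 1 - c := by linarith
  have hDm : (D : ℝ) / n = c * ε := by rw [hc]; field_simp
  have hDmc : (D : ℝ) / n ≤ c := by rw [hDm]; nlinarith
  have hDmε : (D : ℝ) / n < ε := by rw [hDm]; nlinarith
  -- facts about each factor
  have him : ∀ i : ℕ, i < D → (i : ℝ) / n < (D : ℝ) / n := fun i hi =>
    div_lt_div_of_pos_right (by exact_mod_cast hi) hm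
  have himε : ∀ i : ℕ, i < D → (i : ℝ) / n < ε := fun i hi =>
    lt_trans (him i hi) hDmε
  have hix : ∀ i : ℕ, i < D → 0 < x - (i : ℝ) / n := fun i hi => by
    have := himε i hi; linarith
  have hid : ∀ i : ℕ, i < D → 0 < 1 - (i : ℝ) / n := fun i hi => by
    have := himε i hi; linarith
  have hup : ∀ i : ℕ, i < D → (x - (i : ℝ) / n) / (1 - (i : ℝ) / n) ≤ x := by
    intro i hi
    rw [div_le_iff₀ (hid i hi)]
    have h0 : 0 ≤ (i : ℝ) / n := by positivity
    nlinarith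
  have hicx : ∀ i : ℕ, i < D → (i : ℝ) / n ≤ c * x := by
    intro i hi
    have h1 : (i : ℝ) / n ≤ (D : ℝ) / n := (him i hi).le
    have h2 : c * ε ≤ c * x := by nlinarith
    rw [hDm] at h1
    linarith
  have hlo : ∀ i : ℕ, i < D → (1 - c) * x ≤ (x - (i : ℝ) / n) / (1 - (i : ℝ) / n) := by
    intro i hi
    rw [le_div_iff₀ (hid i hi)]
    have h0 : 0 ≤ (i : ℝ) / n := by positivity
    have h1 := hicx i hi
    have ha : 0 ≤ (1 - c) * x := mul_nonneg h1c.le hx0.le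
    have hb : (1 : ℝ) - (i : ℝ) / n ≤ 1 := by linarith
    calc (1 - c) * x * (1 - (i : ℝ) / n) ≤ (1 - c) * x * 1 :=
          mul_le_mul_of_nonneg_left hb ha
      _ = x - c * x := by ring
      _ ≤ x - (i : ℝ) / n := by linarith
  have hpos : ∀ i : ℕ, i < D → 0 < (x - (i : ℝ) / n) / (1 - (i : ℝ) / n) := fun i hi =>
    div_pos (hix i hi) (hid i hi)
  -- rewrite betaFn
  have hbeta : betaFn n D x = ∏ i ∈ Finset.range D, (x - (i : ℝ) / n) / (1 - (i : ℝ) / n) := by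
    unfold betaFn
    refine Finset.prod_congr rfl fun i hi => ?_
    exact max_eq_left (hpos i (Finset.mem_range.mp hi)).le
  have hPup : betaFn n D x ≤ x ^ D := by
    rw [hbeta]
    calc ∏ i ∈ Finset.range D, (x - (i : ℝ) / n) / (1 - (i : ℝ) / n)
        ≤ ∏ _i ∈ Finset.range D, x :=
          Finset.prod_le_prod (fun i hi => (hpos i (Finset.mem_range.mp hi)).le)
            (fun i hi => hup i (Finset.mem_range.mp hi))
      _ = x ^ D := by rw [Finset.prod_const, Finset.card_range]
  have hPlo : ((1 - c) * x) ^ D ≤ betaFn n D x := by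
    rw [hbeta]
    calc ((1 - c) * x) ^ D = ∏ _i ∈ Finset.range D, (1 - c) * x := by
          rw [Finset.prod_const, Finset.card_range]
      _ ≤ ∏ i ∈ Finset.range D, (x - (i : ℝ) / n) / (1 - (i : ℝ) / n) :=
          Finset.prod_le_prod (fun _ _ => by positivity)
            (fun i hi => hlo i (Finset.mem_range.mp hi))
  have hxD : (0 : ℝ) < x ^ D := pow_pos hx0 D
  have hbern : 1 - (D : ℝ) * c ≤ (1 - c) ^ D := by
    have h := one_add_mul_le_pow (a := -c) (by linarith) D
    rw [show (1 : ℝ) + -c = 1 - c by ring] at h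
    linarith [h]
  -- first goal
  have hr1up : betaFn n D x / x ^ D ≤ 1 := (div_le_one hxD).mpr hPup
  have hr1lo : 1 - (D : ℝ) * c ≤ betaFn n D x / x ^ D := by
    rw [le_div_iff₀ hxD]
    calc (1 - (D : ℝ) * c) * x ^ D ≤ (1 - c) ^ D * x ^ D :=
          mul_le_mul_of_nonneg_right hbern hxD.le
      _ = ((1 - c) * x) ^ D := (mul_pow _ _ _).symm
      _ ≤ betaFn n D x := hPlo
  constructor
  · rw [abs_lt]; constructor <;> linarith
  -- derivative part
  have hif : ((D : ℝ) - 1) / n < x := by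
    have h1 : ((D : ℝ) - 1) / n < (D : ℝ) / n := div_lt_div_of_pos_right (by linarith) hm
    linarith
  rw [betaDeriv, if_pos hif]
  have hcard : ∀ j ∈ Finset.range D, ((Finset.range D).erase j).card = D - 1 := by
    intro j hj
    rw [Finset.card_erase_of_mem hj, Finset.card_range]
  have hjc : ∀ j : ℕ, j < D → (j : ℝ) / n ≤ c := fun j hj =>
    le_trans (him j hj).le hDmc
  have hterm_up : ∀ j ∈ Finset.range D,
      (1 - (j : ℝ) / n)⁻¹ * ∏ i ∈ (Finset.range D).erase j,
        (x - (i : ℝ) / n) / (1 - (i : ℝ) / n) ≤ (1 - c)⁻¹ * x ^ (D - 1) := by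
    intro j hj
    have hjD := Finset.mem_range.mp hj
    have hinv : (1 - (j : ℝ) / n)⁻¹ ≤ (1 - c)⁻¹ := by
      apply inv_anti₀ h1c
      have := hjc j hjD; linarith
    have hprod : ∏ i ∈ (Finset.range D).erase j,
        (x - (i : ℝ) / n) / (1 - (i : ℝ) / n) ≤ x ^ (D - 1) := by
      calc ∏ i ∈ (Finset.range D).erase j, (x - (i : ℝ) / n) / (1 - (i : ℝ) / n)
          ≤ ∏ _i ∈ (Finset.range D).erase j, x :=
            Finset.prod_le_prod
              (fun i hi => (hpos i (Finset.mem_range.mp (Finset.mem_of_mem_erase hi))).le)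
              (fun i hi => hup i (Finset.mem_range.mp (Finset.mem_of_mem_erase hi)))
        _ = x ^ (D - 1) := by rw [Finset.prod_const, hcard j hj]
    have h1 : (0 : ℝ) ≤ ∏ i ∈ (Finset.range D).erase j,
        (x - (i : ℝ) / n) / (1 - (i : ℝ) / n) :=
      Finset.prod_nonneg fun i hi =>
        (hpos i (Finset.mem_range.mp (Finset.mem_of_mem_erase hi))).le
    have h2 : (0 : ℝ) ≤ (1 - (j : ℝ) / n)⁻¹ := by
      have := hid j hjD; positivity
    exact mul_le_mul hinv hprod h1 (by positivity)
  have hterm_lo : ∀ j ∈ Finset.range D,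
      (1 - (D : ℝ) * c) * x ^ (D - 1) ≤ (1 - (j : ℝ) / n)⁻¹ *
        ∏ i ∈ (Finset.range D).erase j, (x - (i : ℝ) / n) / (1 - (i : ℝ) / n) := by
    intro j hj
    have hjD := Finset.mem_range.mp hj
    have hinv : 1 ≤ (1 - (j : ℝ) / n)⁻¹ := by
      rw [one_le_inv_iff₀]
      have h0 : 0 ≤ (j : ℝ) / n := by positivity
      exact ⟨hid j hjD, by linarith⟩
    have hprod : ((1 - c) * x) ^ (D - 1) ≤ ∏ i ∈ (Finset.range D).erase j,
        (x - (i : ℝ) / n) / (1 - (i : ℝ) / n) := by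
      calc ((1 - c) * x) ^ (D - 1)
          = ∏ _i ∈ (Finset.range D).erase j, (1 - c) * x := by
            rw [Finset.prod_const, hcard j hj]
        _ ≤ ∏ i ∈ (Finset.range D).erase j, (x - (i : ℝ) / n) / (1 - (i : ℝ) / n) :=
            Finset.prod_le_prod (fun _ _ => by positivity)
              (fun i hi => hlo i (Finset.mem_range.mp (Finset.mem_of_mem_erase hi)))
    have hbern' : 1 - (D : ℝ) * c ≤ (1 - c) ^ (D - 1) := by
      have h := one_add_mul_le_pow (a := -c) (by linarith) (D - 1)
      rw [show (1 : ℝ) + -c = 1 - c by ring] at h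
      have hcast : ((D - 1 : ℕ) : ℝ) = (D : ℝ) - 1 := by
        rw [Nat.cast_sub hD1, Nat.cast_one]
      rw [hcast] at h
      linarith [h, hc0.le]
    have hxD1 : (0 : ℝ) < x ^ (D - 1) := pow_pos hx0 _
    calc (1 - (D : ℝ) * c) * x ^ (D - 1)
        ≤ (1 - c) ^ (D - 1) * x ^ (D - 1) :=
          mul_le_mul_of_nonneg_right hbern' hxD1.le
      _ = ((1 - c) * x) ^ (D - 1) := (mul_pow _ _ _).symm
      _ ≤ ∏ i ∈ (Finset.range D).erase j, (x - (i : ℝ) / n) / (1 - (i : ℝ) / n) := hprod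
      _ ≤ (1 - (j : ℝ) / n)⁻¹ * ∏ i ∈ (Finset.range D).erase j,
            (x - (i : ℝ) / n) / (1 - (i : ℝ) / n) :=
          le_mul_of_one_le_left (Finset.prod_nonneg fun i hi =>
            (hpos i (Finset.mem_range.mp (Finset.mem_of_mem_erase hi))).le) hinv
  set S : ℝ := ∑ j ∈ Finset.range D, (1 - (j : ℝ) / n)⁻¹ *
      ∏ i ∈ (Finset.range D).erase j, (x - (i : ℝ) / n) / (1 - (i : ℝ) / n) with hS
  have hxD1 : (0 : ℝ) < x ^ (D - 1) := pow_pos hx0 _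
  have hP : (0 : ℝ) < (D : ℝ) * x ^ (D - 1) := by positivity
  have hSup : S ≤ (D : ℝ) * ((1 - c)⁻¹ * x ^ (D - 1)) := by
    calc S ≤ ∑ _j ∈ Finset.range D, (1 - c)⁻¹ * x ^ (D - 1) :=
          Finset.sum_le_sum hterm_up
      _ = (D : ℝ) * ((1 - c)⁻¹ * x ^ (D - 1)) := by
          rw [Finset.sum_const, Finset.card_range, nsmul_eq_mul]
  have hSlo : (D : ℝ) * ((1 - (D : ℝ) * c) * x ^ (D - 1)) ≤ S := by
    calc (D : ℝ) * ((1 - (D : ℝ) * c) * x ^ (D - 1))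
        = ∑ _j ∈ Finset.range D, (1 - (D : ℝ) * c) * x ^ (D - 1) := by
          rw [Finset.sum_const, Finset.card_range, nsmul_eq_mul]
      _ ≤ S := Finset.sum_le_sum hterm_lo
  have hr2lo : 1 - (D : ℝ) * c ≤ S / ((D : ℝ) * x ^ (D - 1)) := by
    rw [le_div_iff₀ hP]
    calc (1 - (D : ℝ) * c) * ((D : ℝ) * x ^ (D - 1))
        = (D : ℝ) * ((1 - (D : ℝ) * c) * x ^ (D - 1)) := by ring
      _ ≤ S := hSlo
  have hr2up : S / ((D : ℝ) * x ^ (D - 1)) ≤ (1 - c)⁻¹ := by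
    rw [div_le_iff₀ hP]
    calc S ≤ (D : ℝ) * ((1 - c)⁻¹ * x ^ (D - 1)) := hSup
      _ = (1 - c)⁻¹ * ((D : ℝ) * x ^ (D - 1)) := by ring
  have hinvδ : (1 - c)⁻¹ - 1 < δ := by
    have heq : (1 - c)⁻¹ - 1 = c / (1 - c) := by field_simp; ring
    rw [heq, div_lt_iff₀ h1c]
    nlinarith
  rw [abs_lt]
  constructor <;> linarith


/-- Lemma 5.1 (second part): if `d_n/√n → 0`, then for every `ε ∈ (0,1)`,
`sup_{x ∈ [ε,1]} |β_n/γ_n − 1| → 0` and `sup_{x ∈ [ε,1]} |β'_n/γ'_n − 1| → 0`,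
with `γ_n(x) = x^{d_n}` and `γ'_n(x) = d_n x^{d_n−1}`. -/
theorem stmt4 (d : ℕ → ℕ) (hd : ∀ n : ℕ, 1 ≤ n → 1 ≤ d n ∧ d n ≤ n)
    (hdn : Tendsto (fun n => (d n : ℝ) / Real.sqrt (n : ℝ)) atTop (𝓝 0))
    (ε : ℝ) (hε : ε ∈ Set.Ioo (0 : ℝ) 1) :
    ∀ δ > 0, ∀ᶠ n in atTop, ∀ x ∈ Set.Icc ε 1,
      |betaFn n (d n) x / x ^ (d n) - 1| < δ ∧
      |betaDeriv n (d n) x / ((d n : ℝ) * x ^ (d n - 1)) - 1| < δ := by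
  obtain ⟨hε0, hε1⟩ := hε
  intro δ hδ
  have hM : 0 < ε * min (δ / 2) 4⁻¹ := by positivity
  have hsq : Tendsto (fun n => (d n : ℝ) ^ 2 / (n : ℝ)) atTop (𝓝 0) := by
    have h2 := hdn.mul hdn
    rw [mul_zero] at h2
    refine h2.congr fun n => ?_
    rw [div_mul_div_comm, Real.mul_self_sqrt (Nat.cast_nonneg n), sq]
  have hev : ∀ᶠ n in atTop, (d n : ℝ) ^ 2 / (n : ℝ) < ε * min (δ / 2) 4⁻¹ :=
    hsq.eventually_lt_const hM
  filter_upwards [hev, eventually_ge_atTop 1] with n h1 h2 x hx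
  exact beta_key n (d n) h2 (hd n h2).1 (hd n h2).2 ε δ hε0 hε1.le hδ h1 x hx
end

section
/- Let (d_n) be a sequence of integers with 1 ≤ d_n ≤ n and d_n/n → 0 as n → ∞, and fix ε ∈ (0,1). Then there exist a constant C ∈ (0,∞) and n₀ ∈ ℕ such that for all n ≥ n₀, sup_{x ∈ [ε,1]} | log β_n(x) − log γ_n(x) | ≤ C d_n² / n. -/
open Filter Topology

lemma aux_ineq (x e t : ℝ) (hx : 0 < x) (he : e < 1) (h2 : t ≤ e/2) (h3 : 0 ≤ t) :
    (x - 2*t) * (1 - t) ≤ x - t := by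
  nlinarith [mul_nonneg h3 hx.le, mul_le_mul_of_nonneg_left h2 h3,
    mul_nonneg h3 (by linarith : (0:ℝ) ≤ 1 - e)]

/-- Corollary 5.2: if `d_n/n → 0` then for every `ε ∈ (0,1)` there are `C > 0`
and `n₀` such that for all `n ≥ n₀`,
`sup_{x ∈ [ε,1]} |log β_n(x) − log γ_n(x)| ≤ C d_n²/n`. -/
theorem stmt5 (d : ℕ → ℕ) (hd : ∀ n : ℕ, 1 ≤ n → 1 ≤ d n ∧ d n ≤ n)
    (hdn : Tendsto (fun n => (d n : ℝ) / (n : ℝ)) atTop (𝓝 0))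
    (ε : ℝ) (hε : ε ∈ Set.Ioo (0 : ℝ) 1) :
    ∃ C : ℝ, 0 < C ∧ ∃ n₀ : ℕ, ∀ n ≥ n₀, ∀ x ∈ Set.Icc ε 1,
      |Real.log (betaFn n (d n) x) - Real.log (x ^ (d n))| ≤ C * (d n : ℝ) ^ 2 / (n : ℝ) := by
  obtain ⟨hε0, hε1⟩ := hε
  obtain ⟨N, hN⟩ := Metric.tendsto_atTop.mp hdn (ε/2) (by linarith)
  refine ⟨4/ε, by positivity, max N 1, fun n hn x hx => ?_⟩
  have hn1 : 1 ≤ n := le_trans (le_max_right N 1) hn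
  have hnN : N ≤ n := le_trans (le_max_left N 1) hn
  have hnpos : (0:ℝ) < n := by exact_mod_cast Nat.lt_of_lt_of_le Nat.zero_lt_one hn1
  have hdhalf : (d n : ℝ)/n ≤ ε/2 := by
    have h := hN n hnN
    rw [Real.dist_eq, sub_zero, abs_of_nonneg (by positivity)] at h
    linarith
  obtain ⟨hxε, hx1⟩ := hx
  have hxpos : (0:ℝ) < x := lt_of_lt_of_le hε0 hxε
  set D := d n with hD
  set a : ℕ → ℝ := fun i => (x - (i:ℝ)/n)/(1 - (i:ℝ)/n) with ha
  have hfrac : ∀ i ∈ Finset.range D, (i:ℝ)/n ≤ ε/2 := by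
    intro i hi
    have hi' : (i:ℝ) ≤ D := by exact_mod_cast (Finset.mem_range.mp hi).le
    calc (i:ℝ)/n ≤ (D:ℝ)/n := by gcongr
    _ ≤ ε/2 := hdhalf
  have hfrac0 : ∀ i : ℕ, (0:ℝ) ≤ (i:ℝ)/n := fun i => by positivity
  have hdenpos : ∀ i ∈ Finset.range D, (0:ℝ) < 1 - (i:ℝ)/n := by
    intro i hi; have := hfrac i hi; linarith
  have hapos : ∀ i ∈ Finset.range D, ε/2 ≤ a i := by
    intro i hi
    have h1 := hdenpos i hi
    have h2 := hfrac i hi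
    have h3 := hfrac0 i
    rw [ha]; dsimp only
    rw [le_div_iff₀ h1]
    nlinarith
  have haltx : ∀ i ∈ Finset.range D, a i ≤ x := by
    intro i hi
    have h1 := hdenpos i hi
    have h3 := hfrac0 i
    rw [ha]; dsimp only
    rw [div_le_iff₀ h1]
    nlinarith
  have hxa2 : ∀ i ∈ Finset.range D, x - a i ≤ 2*((i:ℝ)/n) := by
    intro i hi
    have h1 := hdenpos i hi
    have h2 := hfrac i hi
    have h3 := hfrac0 i
    rw [ha]; dsimp only
    rw [sub_le_iff_le_add, ← sub_le_iff_le_add', le_div_iff₀ h1]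
    exact aux_ineq x ε ((i:ℝ)/n) hxpos hε1 h2 h3
  -- log of betaFn
  have hβ : betaFn n D x = ∏ i ∈ Finset.range D, a i := by
    unfold betaFn
    refine Finset.prod_congr rfl fun i hi => ?_
    have := hapos i hi
    exact max_eq_left (by linarith)
  have hβlog : Real.log (betaFn n D x) = ∑ i ∈ Finset.range D, Real.log (a i) := by
    rw [hβ]
    exact Real.log_prod fun i hi => by
      have := hapos i hi; exact (by linarith : (0:ℝ) < a i).ne'
  have hsplit : Real.log (betaFn n D x) - Real.log (x ^ D)
      = ∑ i ∈ Finset.range D, (Real.log (a i) - Real.log x) := by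
    rw [Real.log_pow, hβlog, Finset.sum_sub_distrib, Finset.sum_const,
      Finset.card_range, nsmul_eq_mul]
  -- per-term bound
  have key : ∀ i ∈ Finset.range D, |Real.log (a i) - Real.log x| ≤ 4/(ε*n) * i := by
    intro i hi
    have hai := hapos i hi
    have hai0 : 0 < a i := by linarith
    have hax := haltx i hi
    have hlogle : Real.log (a i) ≤ Real.log x := Real.log_le_log hai0 hax
    rw [abs_sub_comm, abs_of_nonneg (by linarith)]
    have h1 : Real.log x - Real.log (a i) = Real.log (x / a i) := by
      rw [Real.log_div hxpos.ne' hai0.ne']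
    have h2 : Real.log (x / a i) ≤ x / a i - 1 :=
      Real.log_le_sub_one_of_pos (div_pos hxpos hai0)
    have h3 : x / a i - 1 = (x - a i) / a i := by field_simp
    have h4 : (x - a i) / a i ≤ (2*((i:ℝ)/n)) / (ε/2) :=
      div_le_div₀ (by positivity) (hxa2 i hi) (by linarith) hai
    have h5 : (2*((i:ℝ)/n)) / (ε/2) = 4/(ε*n) * i := by
      field_simp; ring
    linarith
  -- sum it up
  have hsum : ∑ i ∈ Finset.range D, ((i:ℝ)) ≤ (D:ℝ) * D := by
    calc ∑ i ∈ Finset.range D, ((i:ℝ))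
        ≤ ∑ _i ∈ Finset.range D, (D:ℝ) :=
          Finset.sum_le_sum fun i hi => by
            exact_mod_cast (Finset.mem_range.mp hi).le
      _ = (D:ℝ) * D := by
          rw [Finset.sum_const, Finset.card_range, nsmul_eq_mul]
  calc |Real.log (betaFn n D x) - Real.log (x ^ D)|
      = |∑ i ∈ Finset.range D, (Real.log (a i) - Real.log x)| := by rw [hsplit]
    _ ≤ ∑ i ∈ Finset.range D, |Real.log (a i) - Real.log x| :=
        Finset.abs_sum_le_sum_abs _ _
    _ ≤ ∑ i ∈ Finset.range D, 4/(ε*n) * i := Finset.sum_le_sum key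
    _ = 4/(ε*n) * ∑ i ∈ Finset.range D, (i:ℝ) := by rw [Finset.mul_sum]
    _ ≤ 4/(ε*n) * ((D:ℝ) * D) := by
        have h0 : (0:ℝ) ≤ 4/(ε*n) := by positivity
        exact mul_le_mul_of_nonneg_left hsum h0
    _ = 4/ε * (D:ℝ)^2 / n := by field_simp
end

section
/- Let (d_n) be integers with 1 ≤ d_n ≤ n and d_n/n → 0, let λ_n ∈ (0,1), and let μ_n be the associated near fixed point. Let i ∈ ℕ be such that liminf_{n→∞} μ_{n,i} > 0. Then λ_n μ_{n,i} β'_n(μ_{n,i}) / (d_n μ_{n,i+1}) → 1 as n → ∞. -/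
open Filter Topology

/-- The near fixed point: `muSeq n d lam i` is the paper's `μ_{n,i+1}`, i.e.
`μ_{n,1} = λ_n` and `μ_{n,i+1} = λ_n β_n(μ_{n,i})`. -/
noncomputable def muSeq (n d : ℕ) (lam : ℝ) : ℕ → ℝ
  | 0 => lam
  | i + 1 => lam * betaFn n d (muSeq n d lam i)

lemma betaFn_nonneg (n d : ℕ) (x : ℝ) : 0 ≤ betaFn n d x :=
  Finset.prod_nonneg fun _ _ => le_max_right _ _

lemma muSeq_nonneg (n d : ℕ) (lam : ℝ) (hlam : 0 ≤ lam) : ∀ j, 0 ≤ muSeq n d lam j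
  | 0 => hlam
  | _ + 1 => mul_nonneg hlam (betaFn_nonneg _ _ _)

lemma key (n dd : ℕ) (hd1 : 1 ≤ dd) (hdn : dd ≤ n) (x lam ε : ℝ)
    (hlam : 0 < lam) (hx : 0 < x) (hε1 : ε < 1) (hε : (dd : ℝ) / n ≤ ε * x) :
    0 < betaFn n dd x ∧
    (dd : ℝ) * (lam * betaFn n dd x) ≤ lam * x * betaDeriv n dd x ∧
    lam * x * betaDeriv n dd x ≤ (dd : ℝ) * (lam * betaFn n dd x) * (1 - ε)⁻¹ := by
  have hn0 : (0 : ℝ) < n := by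
    have h1 : 1 ≤ n := le_trans hd1 hdn
    exact_mod_cast Nat.lt_of_lt_of_le Nat.zero_lt_one h1
  have hdd0 : (0 : ℝ) < (dd : ℝ) / n := div_pos (by exact_mod_cast hd1) hn0
  have hεx : 0 < ε * x := lt_of_lt_of_le hdd0 hε
  have h1ε : 0 < 1 - ε := by linarith
  have hb : ∀ j ∈ Finset.range dd, 0 < 1 - (j : ℝ) / n := by
    intro j hj
    have hjn : (j : ℝ) < n := by
      exact_mod_cast Nat.lt_of_lt_of_le (Finset.mem_range.mp hj) hdn
    rw [sub_pos, div_lt_one hn0]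
    exact hjn
  have ha' : ∀ j ∈ Finset.range dd, (j : ℝ) / n < ε * x := by
    intro j hj
    have hjd : (j : ℝ) < (dd : ℝ) := by exact_mod_cast Finset.mem_range.mp hj
    have h2 : (j : ℝ) / n < (dd : ℝ) / n := by gcongr
    linarith
  have ha : ∀ j ∈ Finset.range dd, x * (1 - ε) < x - (j : ℝ) / n := by
    intro j hj
    have := ha' j hj
    nlinarith
  have hxε : x * (1 - ε) > 0 := mul_pos hx h1ε
  have hapos : ∀ j ∈ Finset.range dd, 0 < x - (j : ℝ) / n := fun j hj =>
    lt_trans hxε (ha j hj)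
  set P : ℝ := ∏ j ∈ Finset.range dd, (x - (j : ℝ) / n) / (1 - (j : ℝ) / n) with hPdef
  have hP : betaFn n dd x = P := by
    refine Finset.prod_congr rfl fun j hj => ?_
    exact max_eq_left (le_of_lt (div_pos (hapos j hj) (hb j hj)))
  have hPpos : 0 < P :=
    Finset.prod_pos fun j hj => div_pos (hapos j hj) (hb j hj)
  have hcond : ((dd : ℝ) - 1) / n < x := by
    have h2 : ((dd : ℝ) - 1) / n < (dd : ℝ) / n := by gcongr <;> linarith
    have h3 : ε * x < x := by nlinarith
    linarith
  have hBD : betaDeriv n dd x = ∑ j ∈ Finset.range dd, P / (x - (j : ℝ) / n) := by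
    rw [betaDeriv, if_pos hcond]
    refine Finset.sum_congr rfl fun j hj => ?_
    have hprod := Finset.mul_prod_erase (Finset.range dd)
      (fun i => (x - (i : ℝ) / n) / (1 - (i : ℝ) / n)) hj
    rw [hPdef, ← hprod]
    have h1 := (hapos j hj).ne'
    have h2 := (hb j hj).ne'
    set E : ℝ := ∏ i ∈ (Finset.range dd).erase j, (x - (i : ℝ) / n) / (1 - (i : ℝ) / n)
      with hE
    show (1 - (j : ℝ) / n)⁻¹ * E = (x - (j : ℝ) / n) / (1 - (j : ℝ) / n) * E / (x - (j : ℝ) / n)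
    have hsmall : (x - (j : ℝ) / n) / (1 - (j : ℝ) / n) / (x - (j : ℝ) / n)
        = (1 - (j : ℝ) / n)⁻¹ := by
      rw [div_div, mul_comm, ← div_div, div_self h1, one_div]
    rw [mul_comm ((x - (j : ℝ) / n) / (1 - (j : ℝ) / n)) E, mul_div_assoc E, hsmall,
      mul_comm]
  have hjn_nonneg : ∀ j ∈ Finset.range dd, (0 : ℝ) ≤ (j : ℝ) / n := fun j _ =>
    div_nonneg (Nat.cast_nonneg j) hn0.le
  constructor
  · rw [hP]; exact hPpos
  constructor
  · rw [hP, hBD]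
    calc (dd : ℝ) * (lam * P) = ∑ _j ∈ Finset.range dd, lam * P := by
          rw [Finset.sum_const, Finset.card_range, nsmul_eq_mul]
      _ ≤ ∑ j ∈ Finset.range dd, lam * x * (P / (x - (j : ℝ) / n)) := by
          refine Finset.sum_le_sum fun j hj => ?_
          rw [mul_div_assoc', le_div_iff₀ (hapos j hj)]
          nlinarith [mul_nonneg (mul_pos hlam hPpos).le (hjn_nonneg j hj)]
      _ = lam * x * ∑ j ∈ Finset.range dd, P / (x - (j : ℝ) / n) := by
          rw [Finset.mul_sum]
  · rw [hP, hBD]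
    calc lam * x * ∑ j ∈ Finset.range dd, P / (x - (j : ℝ) / n)
        = ∑ j ∈ Finset.range dd, lam * x * (P / (x - (j : ℝ) / n)) := by
          rw [Finset.mul_sum]
      _ ≤ ∑ _j ∈ Finset.range dd, lam * P * (1 - ε)⁻¹ := by
          refine Finset.sum_le_sum fun j hj => ?_
          rw [mul_div_assoc', div_le_iff₀ (hapos j hj)]
          have h4 : lam * P * (1 - ε)⁻¹ * (x - (j : ℝ) / n)
              = lam * P * (x - (j : ℝ) / n) / (1 - ε) := by ring
          rw [h4, le_div_iff₀ h1ε]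
          nlinarith [mul_pos (mul_pos hlam hPpos) (sub_pos.mpr (ha j hj))]
      _ = (dd : ℝ) * (lam * P) * (1 - ε)⁻¹ := by
          rw [Finset.sum_const, Finset.card_range, nsmul_eq_mul]
          ring

/-- Corollary 5.3: if `d_n/n → 0` and `liminf μ_{n,i} > 0` for some `i ≥ 1`, then
`λ_n μ_{n,i} β'_n(μ_{n,i}) / (d_n μ_{n,i+1}) → 1`. -/
theorem stmt6 (d : ℕ → ℕ) (hd : ∀ n : ℕ, 1 ≤ n → 1 ≤ d n ∧ d n ≤ n)
    (hdn : Tendsto (fun n => (d n : ℝ) / (n : ℝ)) atTop (𝓝 0))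
    (lam : ℕ → ℝ) (hlam : ∀ n, lam n ∈ Set.Ioo (0 : ℝ) 1)
    (i : ℕ) (hi : 1 ≤ i)
    (hliminf : 0 < Filter.liminf (fun n => muSeq n (d n) (lam n) (i - 1)) atTop) :
    Tendsto (fun n =>
        lam n * muSeq n (d n) (lam n) (i - 1) *
          betaDeriv n (d n) (muSeq n (d n) (lam n) (i - 1)) /
        ((d n : ℝ) * muSeq n (d n) (lam n) i))
      atTop (𝓝 1) := by
  obtain ⟨k, rfl⟩ : ∃ k, i = k + 1 := ⟨i - 1, by omega⟩
  simp only [Nat.add_sub_cancel] at hliminf ⊢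
  set f : ℕ → ℝ := fun n => muSeq n (d n) (lam n) k with hf
  have hbdd : IsBoundedUnder (· ≥ ·) atTop f :=
    Filter.isBoundedUnder_of ⟨0, fun n =>
      muSeq_nonneg n (d n) (lam n) (hlam n).1.le k⟩
  set c : ℝ := liminf f atTop / 2 with hcdef
  have hc : 0 < c := half_pos hliminf
  have hE1 : ∀ᶠ n in atTop, c < f n :=
    eventually_lt_of_lt_liminf (half_lt_self hliminf) hbdd
  have hE2 : ∀ᶠ n in atTop, (d n : ℝ) / n < c := hdn.eventually_lt_const hc
  have hE3 : ∀ᶠ n in atTop, 1 ≤ n := eventually_ge_atTop 1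
  have hg : Tendsto (fun n => (1 - ((d n : ℝ) / n) / c)⁻¹) atTop (𝓝 1) := by
    have h0 : Tendsto (fun n => ((d n : ℝ) / n) / c) atTop (𝓝 0) := by
      simpa using hdn.div_const c
    have h1 : Tendsto (fun n => 1 - ((d n : ℝ) / n) / c) atTop (𝓝 1) := by
      simpa using tendsto_const_nhds.sub h0
    simpa using h1.inv₀ (by norm_num)
  have hbounds : ∀ᶠ n in atTop,
      1 ≤ lam n * f n * betaDeriv n (d n) (f n) /
        ((d n : ℝ) * muSeq n (d n) (lam n) (k + 1)) ∧
      lam n * f n * betaDeriv n (d n) (f n) /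
        ((d n : ℝ) * muSeq n (d n) (lam n) (k + 1)) ≤
        (1 - ((d n : ℝ) / n) / c)⁻¹ := by
    filter_upwards [hE1, hE2, hE3] with n h1 h2 h3
    obtain ⟨hd1, hd2⟩ := hd n h3
    have hx : 0 < f n := lt_trans hc h1
    have hε1 : ((d n : ℝ) / n) / c < 1 := (div_lt_one hc).mpr h2
    have hε0 : 0 ≤ ((d n : ℝ) / n) / c :=
      div_nonneg (div_nonneg (Nat.cast_nonneg _) (Nat.cast_nonneg _)) hc.le
    have hεle : (d n : ℝ) / n ≤ (((d n : ℝ) / n) / c) * f n := by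
      calc (d n : ℝ) / n = (((d n : ℝ) / n) / c) * c := (div_mul_cancel₀ _ hc.ne').symm
        _ ≤ (((d n : ℝ) / n) / c) * f n := mul_le_mul_of_nonneg_left h1.le hε0
    obtain ⟨hPpos, hlo, hup⟩ := key n (d n) hd1 hd2 (f n) (lam n)
      (((d n : ℝ) / n) / c) (hlam n).1 hx hε1 hεle
    have hmu : muSeq n (d n) (lam n) (k + 1) = lam n * betaFn n (d n) (f n) := rfl
    have hB : 0 < (d n : ℝ) * muSeq n (d n) (lam n) (k + 1) := by
      rw [hmu]
      exact mul_pos (by exact_mod_cast hd1) (mul_pos (hlam n).1 hPpos)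
    constructor
    · rw [le_div_iff₀ hB, one_mul, hmu]
      exact hlo
    · rw [div_le_iff₀ hB]
      calc lam n * f n * betaDeriv n (d n) (f n) ≤
          (d n : ℝ) * (lam n * betaFn n (d n) (f n)) * (1 - ((d n : ℝ) / n) / c)⁻¹ := hup
        _ = (1 - ((d n : ℝ) / n) / c)⁻¹ * ((d n : ℝ) * muSeq n (d n) (lam n) (k + 1)) := by
            rw [hmu]; ring
  exact tendsto_of_tendsto_of_tendsto_of_le_of_le' tendsto_const_nhds hg
    (hbounds.mono fun n h => h.1) (hbounds.mono fun n h => h.2)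
end

section
/- Let (d_n) be integers with 1 ≤ d_n ≤ n and d_n/n → 0, let λ_n ∈ (0,1), let μ_n be the associated near fixed point, and fix ε ∈ (0,1). Then there exist C ∈ (0,∞) and n₀ ∈ ℕ such that: whenever k ∈ ℕ and n₁ ∈ ℕ satisfy μ_{n,k} ≥ ε for all n ≥ n₁, then for all n ≥ max(n₀, n₁), | log μ_{n,k+1} − (log λ_n)·(∑_{i=0}^{k} d_n^i) | ≤ (C/n) ∑_{i=1}^{k} d_n^{i+1}. -/
open Filter Topology

lemma ratio_est (ε c x : ℝ) (hε0 : 0 < ε) (hε1 : ε ≤ 1) (hc0 : 0 ≤ c)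
    (hc : c ≤ ε / 4) (hx : ε ≤ x) (hx1 : x ≤ 1) :
    ε / 2 ≤ (x - c) / (1 - c) ∧ (x - c) / (1 - c) ≤ x ∧
      Real.log x - Real.log ((x - c) / (1 - c)) ≤ 4 * c / ε := by
  have h1 : (0:ℝ) < 1 - c := by linarith
  set r := (x - c) / (1 - c) with hr
  have hrx : r ≤ x := by rw [hr, div_le_iff₀ h1]; nlinarith
  have hrlow : x - 2 * c ≤ r := by rw [hr, le_div_iff₀ h1]; nlinarith
  have hrε : ε / 2 ≤ r := by linarith
  have hrpos : 0 < r := by linarith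
  refine ⟨hrε, hrx, ?_⟩
  have hxpos : 0 < x := by linarith
  have hlog : Real.log x - Real.log r = Real.log (x / r) :=
    (Real.log_div (ne_of_gt hxpos) (ne_of_gt hrpos)).symm
  have h2 : Real.log (x / r) ≤ x / r - 1 :=
    Real.log_le_sub_one_of_pos (div_pos hxpos hrpos)
  have h3 : x / r - 1 ≤ 4 * c / ε := by
    rw [div_sub_one (ne_of_gt hrpos), div_le_div_iff₀ hrpos hε0]
    nlinarith
  linarith [hlog ▸ (h2.trans h3)]

lemma betaFn_log_est (ε : ℝ) (hε0 : 0 < ε) (hε1 : ε ≤ 1) (n d : ℕ)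
    (hn : 1 ≤ n) (hdn : (d : ℝ) / n ≤ ε / 4) (x : ℝ) (hx : ε ≤ x) (hx1 : x ≤ 1) :
    0 < betaFn n d x ∧
      |Real.log (betaFn n d x) - d * Real.log x| ≤ 4 / ε * (d : ℝ) ^ 2 / n := by
  have hn0 : (0:ℝ) < n := by exact_mod_cast hn
  have key : ∀ i ∈ Finset.range d,
      ε / 2 ≤ (x - (i:ℝ)/n) / (1 - (i:ℝ)/n) ∧ (x - (i:ℝ)/n) / (1 - (i:ℝ)/n) ≤ x ∧
        Real.log x - Real.log ((x - (i:ℝ)/n) / (1 - (i:ℝ)/n)) ≤ 4 * ((i:ℝ)/n) / ε := by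
    intro i hi
    have hid : (i:ℝ) ≤ d := by
      exact_mod_cast le_of_lt (Finset.mem_range.mp hi)
    exact ratio_est ε ((i:ℝ)/n) x hε0 hε1 (by positivity)
      (le_trans (by gcongr) hdn) hx hx1
  have hprod : betaFn n d x = ∏ i ∈ Finset.range d, (x - (i:ℝ)/n) / (1 - (i:ℝ)/n) := by
    refine Finset.prod_congr rfl fun i hi => max_eq_left ?_
    linarith [(key i hi).1]
  have hpos : 0 < betaFn n d x := by
    rw [hprod]
    exact Finset.prod_pos fun i hi => lt_of_lt_of_le (by linarith) (key i hi).1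
  refine ⟨hpos, ?_⟩
  have hlog : Real.log (betaFn n d x) =
      ∑ i ∈ Finset.range d, Real.log ((x - (i:ℝ)/n) / (1 - (i:ℝ)/n)) := by
    rw [hprod]
    exact Real.log_prod fun i hi => by linarith [(key i hi).1, hε0]
  have hdx : (d : ℝ) * Real.log x = ∑ _i ∈ Finset.range d, Real.log x := by
    rw [Finset.sum_const, Finset.card_range, nsmul_eq_mul]
  rw [hlog, hdx, ← Finset.sum_sub_distrib]
  calc |∑ i ∈ Finset.range d, (Real.log ((x - (i:ℝ)/n) / (1 - (i:ℝ)/n)) - Real.log x)|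
      ≤ ∑ i ∈ Finset.range d, |Real.log ((x - (i:ℝ)/n) / (1 - (i:ℝ)/n)) - Real.log x| :=
        Finset.abs_sum_le_sum_abs _ _
    _ ≤ ∑ i ∈ Finset.range d, 4 / ε * (d:ℝ) / n := by
        refine Finset.sum_le_sum fun i hi => ?_
        obtain ⟨h1, h2, h3⟩ := key i hi
        have hxpos : 0 < x := by linarith
        have hle : Real.log ((x - (i:ℝ)/n) / (1 - (i:ℝ)/n)) ≤ Real.log x :=
          Real.log_le_log (by linarith) h2
        rw [abs_sub_comm, abs_of_nonneg (by linarith)]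
        have hid : (i:ℝ) ≤ d := by
          exact_mod_cast le_of_lt (Finset.mem_range.mp hi)
        calc Real.log x - Real.log ((x - (i:ℝ)/n) / (1 - (i:ℝ)/n))
            ≤ 4 * ((i:ℝ)/n) / ε := h3
          _ ≤ 4 / ε * (d:ℝ) / n := by
              rw [show 4 * ((i:ℝ)/n) / ε = 4 / ε * (i:ℝ) / n by ring]
              gcongr
    _ = 4 / ε * (d:ℝ)^2 / n := by
        rw [Finset.sum_const, Finset.card_range, nsmul_eq_mul]; ring

lemma betaFn_le_pow (n d : ℕ) (hd : d ≤ n) (hn : 1 ≤ n) (x : ℝ)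
    (hx0 : 0 ≤ x) (hx1 : x ≤ 1) : betaFn n d x ≤ x ^ d := by
  have hn0 : (0:ℝ) < n := by exact_mod_cast hn
  have hle : betaFn n d x ≤ ∏ _i ∈ Finset.range d, x := by
    refine Finset.prod_le_prod (fun i _ => le_max_right _ _) fun i hi => ?_
    have hin : (i:ℝ) < n := by
      exact_mod_cast lt_of_lt_of_le (Finset.mem_range.mp hi) hd
    have h1 : 0 < 1 - (i:ℝ)/n := by
      rw [sub_pos]; exact (div_lt_one hn0).2 hin
    refine max_le ?_ hx0
    rw [div_le_iff₀ h1]; nlinarith [div_nonneg (Nat.cast_nonneg (α := ℝ) i) hn0.le]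
  simpa [Finset.prod_const] using hle

lemma muSeq_mem (n d : ℕ) (hd : d ≤ n) (hn : 1 ≤ n) (lam : ℝ)
    (h0 : 0 ≤ lam) (h1 : lam ≤ 1) : ∀ i, muSeq n d lam i ∈ Set.Icc (0:ℝ) 1 := by
  intro i
  induction i with
  | zero => exact ⟨h0, h1⟩
  | succ i ih =>
    obtain ⟨ih0, ih1⟩ := ih
    have hb0 : 0 ≤ betaFn n d (muSeq n d lam i) :=
      Finset.prod_nonneg fun j _ => le_max_right _ _
    have hb1 : betaFn n d (muSeq n d lam i) ≤ 1 :=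
      (betaFn_le_pow n d hd hn _ ih0 ih1).trans (pow_le_one₀ ih0 ih1)
    exact ⟨mul_nonneg h0 hb0, mul_le_one₀ h1 hb0 hb1⟩

lemma muSeq_anti (n d : ℕ) (hd1 : 1 ≤ d) (hd : d ≤ n) (hn : 1 ≤ n) (lam : ℝ)
    (h0 : 0 ≤ lam) (h1 : lam ≤ 1) : Antitone (muSeq n d lam) := by
  refine antitone_nat_of_succ_le fun i => ?_
  obtain ⟨ih0, ih1⟩ := muSeq_mem n d hd hn lam h0 h1 i
  have hb0 : 0 ≤ betaFn n d (muSeq n d lam i) :=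
    Finset.prod_nonneg fun j _ => le_max_right _ _
  have : betaFn n d (muSeq n d lam i) ≤ muSeq n d lam i :=
    (betaFn_le_pow n d hd hn _ ih0 ih1).trans
      (by simpa using pow_le_pow_of_le_one ih0 ih1 hd1)
  calc muSeq n d lam (i+1) = lam * betaFn n d (muSeq n d lam i) := rfl
    _ ≤ 1 * betaFn n d (muSeq n d lam i) :=
        mul_le_mul_of_nonneg_right h1 hb0
    _ ≤ muSeq n d lam i := by rw [one_mul]; exact this

lemma sum_pow_succ (d : ℝ) : ∀ m : ℕ,
    ∑ i ∈ Finset.Icc 1 (m+1), d^(i+1) = d^2 + d * ∑ i ∈ Finset.Icc 1 m, d^(i+1) := by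
  intro m
  induction m with
  | zero => simp
  | succ m ih =>
    rw [Finset.sum_Icc_succ_top (by omega : 1 ≤ m + 2)]
    nth_rewrite 2 [Finset.sum_Icc_succ_top (by omega : 1 ≤ m + 1)]
    rw [ih]; ring

lemma main_est (ε : ℝ) (hε0 : 0 < ε) (hε1 : ε ≤ 1) (n d : ℕ) (hn : 1 ≤ n)
    (hd1 : 1 ≤ d) (hd : d ≤ n) (hdn : (d : ℝ) / n ≤ ε / 4) (lam : ℝ)
    (hl0 : 0 < lam) (hl1 : lam < 1) (k : ℕ)
    (hμ : ∀ j < k, ε ≤ muSeq n d lam j) :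
    ∀ m ≤ k, |Real.log (muSeq n d lam m) -
        Real.log lam * ∑ i ∈ Finset.range (m+1), (d:ℝ)^i| ≤
      4 / ε / n * ∑ i ∈ Finset.Icc 1 m, (d:ℝ)^(i+1) := by
  intro m
  induction m with
  | zero => intro _; simp [muSeq]
  | succ m ih =>
    intro hmk
    have hεm : ε ≤ muSeq n d lam m := hμ m (by omega)
    have hm1 : muSeq n d lam m ≤ 1 :=
      (muSeq_mem n d hd hn lam hl0.le hl1.le m).2
    obtain ⟨hbpos, hbest⟩ := betaFn_log_est ε hε0 hε1 n d hn hdn _ hεm hm1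
    have hprev := ih (by omega)
    have hn0 : (0:ℝ) < n := by exact_mod_cast hn
    have hlogsplit : Real.log (muSeq n d lam (m+1)) =
        Real.log lam + Real.log (betaFn n d (muSeq n d lam m)) := by
      show Real.log (lam * _) = _
      rw [Real.log_mul (ne_of_gt hl0) (ne_of_gt hbpos)]
    have hgeom : ∑ i ∈ Finset.range (m+2), (d:ℝ)^i =
        (d:ℝ) * ∑ i ∈ Finset.range (m+1), (d:ℝ)^i + 1 := geom_sum_succ
    have key : Real.log (muSeq n d lam (m+1)) -
        Real.log lam * ∑ i ∈ Finset.range (m+2), (d:ℝ)^i =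
        (Real.log (betaFn n d (muSeq n d lam m)) - d * Real.log (muSeq n d lam m))
        + d * (Real.log (muSeq n d lam m) -
            Real.log lam * ∑ i ∈ Finset.range (m+1), (d:ℝ)^i) := by
      rw [hlogsplit, hgeom]; ring
    rw [key, sum_pow_succ]
    calc |_ + (d:ℝ) * _| ≤ 4 / ε * (d:ℝ)^2 / n +
          (d:ℝ) * (4 / ε / n * ∑ i ∈ Finset.Icc 1 m, (d:ℝ)^(i+1)) := by
          refine (abs_add_le _ _).trans (add_le_add hbest ?_)
          rw [abs_mul, abs_of_nonneg (by positivity : (0:ℝ) ≤ (d:ℝ))]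
          exact mul_le_mul_of_nonneg_left hprev (by positivity)
      _ = 4 / ε / n * ((d:ℝ)^2 + d * ∑ i ∈ Finset.Icc 1 m, (d:ℝ)^(i+1)) := by
          ring

/-- Lemma 5.4: if `d_n/n → 0` and `ε ∈ (0,1)`, there are `C > 0` and `n₀` such
that whenever `μ_{n,k} ≥ ε` for all `n ≥ n₁`, then for all `n ≥ max n₀ n₁`,
`|log μ_{n,k+1} − (log λ_n) ∑_{i=0}^k d_n^i| ≤ (C/n) ∑_{i=1}^k d_n^{i+1}`. -/
theorem stmt7 (d : ℕ → ℕ) (hd : ∀ n : ℕ, 1 ≤ n → 1 ≤ d n ∧ d n ≤ n)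
    (hdn : Tendsto (fun n => (d n : ℝ) / (n : ℝ)) atTop (𝓝 0))
    (lam : ℕ → ℝ) (hlam : ∀ n, lam n ∈ Set.Ioo (0 : ℝ) 1)
    (ε : ℝ) (hε : ε ∈ Set.Ioo (0 : ℝ) 1) :
    ∃ C : ℝ, 0 < C ∧ ∃ n₀ : ℕ, ∀ k : ℕ, 1 ≤ k → ∀ n₁ : ℕ,
      (∀ n ≥ n₁, ε ≤ muSeq n (d n) (lam n) (k - 1)) →
      ∀ n ≥ max n₀ n₁,
        |Real.log (muSeq n (d n) (lam n) k) -
            Real.log (lam n) * ∑ i ∈ Finset.range (k + 1), (d n : ℝ) ^ i| ≤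
          C / (n : ℝ) * ∑ i ∈ Finset.Icc 1 k, (d n : ℝ) ^ (i + 1) := by
  obtain ⟨hε0, hε1⟩ := hε
  have hev : ∀ᶠ n in atTop, (d n : ℝ) / n < ε / 4 :=
    hdn.eventually (gt_mem_nhds (by positivity))
  obtain ⟨N, hN⟩ := eventually_atTop.mp hev
  refine ⟨4 / ε, by positivity, max N 1, ?_⟩
  intro k hk n₁ hyp n hn
  have hnN : N ≤ n := le_trans (le_trans (le_max_left _ _) (le_max_left _ _)) hn
  have hn1 : 1 ≤ n := le_trans (le_trans (le_max_right _ _) (le_max_left _ _)) hn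
  have hnn1 : n₁ ≤ n := le_trans (le_max_right _ _) hn
  obtain ⟨hd1, hdle⟩ := hd n hn1
  obtain ⟨hl0, hl1⟩ := hlam n
  have hdn' : (d n : ℝ) / n ≤ ε / 4 := (hN n hnN).le
  have hμ : ∀ j < k, ε ≤ muSeq n (d n) (lam n) j := fun j hj =>
    le_trans (hyp n hnn1)
      (muSeq_anti n (d n) hd1 hdle hn1 (lam n) hl0.le hl1.le (by omega : j ≤ k - 1))
  have h := main_est ε hε0 hε1.le n (d n) hn1 hd1 hdle hdn' (lam n) hl0 hl1 k hμ k le_rfl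
  calc |Real.log (muSeq n (d n) (lam n) k) -
      Real.log (lam n) * ∑ i ∈ Finset.range (k + 1), (d n : ℝ) ^ i|
      ≤ 4 / ε / n * ∑ i ∈ Finset.Icc 1 k, (d n : ℝ) ^ (i + 1) := h
    _ = 4 / ε / (n : ℝ) * ∑ i ∈ Finset.Icc 1 k, (d n : ℝ) ^ (i + 1) := rfl
end
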